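/- arXiv:1009.0494 — 5 statements merged into one kernel-verified Lean document; each statement's English description precedes it below -/
import Mathlib

section
/- If ξ = k + ia with k real and 0 < a < π/4, then 0 < Re √(−ξ tanh ξ) ≤ (a/√(cos 2a)) · √(tanh k / k). -/
/-!
With `D = cosh 2k + cos 2a` one has `tanh (k + ia) = (sinh 2k + i sin 2a) / D`, which makes the
real and imaginary parts of `w = -ξ tanh ξ` explicit. Since `Re √w = √((|w| + Re w) / 2)`, the
bound `Re √w ≤ √m` is equivalent to the parabola condition `(Im w)² ≤ 4m (m - Re w)`. Writing
`sinh 2k = k R` with `R = (tanh k / k) (cosh 2k + 1) ≥ 2` (this is `sinh x ≥ x`), and using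
`sin 2a ≤ 2a` and `cos 2a ≤ 1`, the condition reduces to a polynomial inequality which is a
nonnegative combination of `R - 2` and `2a - sin 2a`. Positivity holds because `w` avoids the
closed negative real axis.
-/

open Real

namespace Complex

open ComplexConjugate

theorem tanh_add_mul_I (x y : ℝ) :
    tanh (x + y * I) =
      (Real.sinh (2 * x) + Real.sin (2 * y) * I) / (Real.cosh (2 * x) + Real.cos (2 * y)) := by
  set ξ : ℂ := x + y * I
  have hsum : ξ + conj ξ = (2 * x : ℝ) := by apply Complex.ext <;> simp [ξ]; ring
  have hdiff : ξ - conj ξ = (2 * y : ℝ) * I := by apply Complex.ext <;> simp [ξ]; ring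
  -- multiply numerator and denominator by `cosh (conj ξ)` and use the product-to-sum formulas
  have hnum : 2 * sinh ξ * cosh (conj ξ) = Real.sinh (2 * x) + Real.sin (2 * y) * I := by
    rw [ofReal_sinh, ofReal_sin, ← sinh_mul_I, ← hsum, ← hdiff, sinh_add ξ, sinh_sub ξ]
    ring
  have hden : 2 * cosh ξ * cosh (conj ξ) = Real.cosh (2 * x) + Real.cos (2 * y) := by
    rw [ofReal_cosh, ofReal_cos, ← cosh_mul_I, ← hsum, ← hdiff, cosh_add ξ, cosh_sub ξ]
    ring
  rw [tanh_eq_sinh_div_cosh, ← hnum, ← hden]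
  rcases eq_or_ne (cosh ξ) 0 with h | h
  · simp [h]
  · rw [mul_assoc, mul_assoc, mul_div_mul_left _ _ two_ne_zero,
      mul_div_mul_right _ _ (by rwa [cosh_conj, map_ne_zero])]

theorem neg_mul_tanh_add_mul_I (x y : ℝ) :
    -(x + y * I) * tanh (x + y * I) =
      ((y * Real.sin (2 * y) - x * Real.sinh (2 * x)) /
          (Real.cosh (2 * x) + Real.cos (2 * y)) : ℝ) +
        (-(x * Real.sin (2 * y) + y * Real.sinh (2 * x)) /
          (Real.cosh (2 * x) + Real.cos (2 * y)) : ℝ) * I := by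
  rw [tanh_add_mul_I]
  push_cast
  ring_nf
  simp only [I_sq]
  ring

theorem neg_mul_tanh_add_mul_I_re (x y : ℝ) :
    (-(x + y * I) * tanh (x + y * I)).re =
      (y * Real.sin (2 * y) - x * Real.sinh (2 * x)) / (Real.cosh (2 * x) + Real.cos (2 * y)) := by
  rw [neg_mul_tanh_add_mul_I]
  simp only [add_re, ofReal_re, re_ofReal_mul, I_re]
  ring

theorem neg_mul_tanh_add_mul_I_im (x y : ℝ) :
    (-(x + y * I) * tanh (x + y * I)).im =
      -(x * Real.sin (2 * y) + y * Real.sinh (2 * x)) /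
        (Real.cosh (2 * x) + Real.cos (2 * y)) := by
  rw [neg_mul_tanh_add_mul_I]
  simp only [add_im, ofReal_im, im_ofReal_mul, I_im]
  ring

theorem neg_mul_tanh_add_mul_I_mem_slitPlane (x : ℝ) {y : ℝ} (hy₀ : 0 < y) (hy : y < π / 2) :
    -(x + y * I) * tanh (x + y * I) ∈ slitPlane := by
  have hσ : 0 < Real.sin (2 * y) := Real.sin_pos_of_pos_of_lt_pi (by linarith) (by linarith)
  have hD : 0 < Real.cosh (2 * x) + Real.cos (2 * y) := by
    rw [Real.cos_two_mul]
    nlinarith [Real.one_le_cosh (2 * x), Real.cos_pos_of_mem_Ioo ⟨by linarith, hy⟩]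
  rw [mem_slitPlane_iff, neg_mul_tanh_add_mul_I_re, neg_mul_tanh_add_mul_I_im]
  rcases eq_or_ne x 0 with rfl | hx
  · left
    simpa using div_pos (mul_pos hy₀ hσ) hD
  · right
    have hsinh : 0 < x * Real.sinh (2 * x) := by
      rcases hx.lt_or_gt with hx | hx
      · exact mul_pos_of_neg_of_neg hx (Real.sinh_neg_iff.2 (by linarith))
      · exact mul_pos hx (Real.sinh_pos_iff.2 (by linarith))
    have : 0 < x * (x * Real.sin (2 * y) + y * Real.sinh (2 * x)) := by
      nlinarith [mul_pos hy₀ hsinh, mul_pos (sq_pos_of_ne_zero hx) hσ]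
    exact div_ne_zero (neg_ne_zero.2 (right_ne_zero_of_mul this.ne')) hD.ne'

theorem cpow_one_half_re_pos {z : ℂ} (hz : z ∈ slitPlane) : 0 < (z ^ (1 / 2 : ℂ)).re := by
  rw [one_div, cpow_inv_two_re, Real.sqrt_pos]
  rcases mem_slitPlane_iff.1 hz with hre | him
  · linarith [norm_nonneg z]
  · linarith [neg_le_abs z.re, abs_re_lt_norm.2 him]

theorem cpow_one_half_re_le_sqrt {z : ℂ} {m : ℝ} (hm : 0 < m)
    (h : z.im ^ 2 ≤ 4 * m * (m - z.re)) : (z ^ (1 / 2 : ℂ)).re ≤ √m := by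
  rw [one_div, cpow_inv_two_re]
  refine Real.sqrt_le_sqrt ?_
  have hre : z.re ≤ m := by nlinarith [sq_nonneg z.im]
  have hnorm : ‖z‖ ^ 2 = z.re ^ 2 + z.im ^ 2 := by rw [Complex.sq_norm, normSq_apply]; ring
  nlinarith [norm_nonneg z]

end Complex

namespace Real

noncomputable def tanhc (x : ℝ) : ℝ := if x = 0 then 1 else tanh x / x

theorem mul_tanhc (x : ℝ) : x * tanhc x = tanh x := by
  rcases eq_or_ne x 0 with rfl | hx
  · simp
  · rw [tanhc, if_neg hx, mul_div_cancel₀ _ hx]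

theorem sinh_two_mul_eq_tanh_mul (x : ℝ) : sinh (2 * x) = tanh x * (cosh (2 * x) + 1) := by
  rw [sinh_two_mul, cosh_two_mul, tanh_eq_sinh_div_cosh]
  field_simp
  linear_combination sinh x * cosh_sq_sub_sinh_sq x

theorem sinh_two_mul_eq_mul_tanhc_mul (x : ℝ) :
    sinh (2 * x) = x * (tanhc x * (cosh (2 * x) + 1)) := by
  rw [sinh_two_mul_eq_tanh_mul, ← mul_tanhc, mul_assoc]

theorem two_le_tanhc_mul (x : ℝ) : 2 ≤ tanhc x * (cosh (2 * x) + 1) := by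
  rcases eq_or_ne x 0 with rfl | hx
  · norm_num [tanhc]
  rw [tanhc, if_neg hx, div_mul_eq_mul_div, ← sinh_two_mul_eq_tanh_mul]
  rcases hx.lt_or_gt with hx | hx
  · rw [le_div_iff_of_neg hx]
    linarith [sinh_le_self_iff.2 (by linarith : 2 * x ≤ 0)]
  · rw [le_div_iff₀ hx]
    linarith [self_le_sinh_iff.2 (by linarith : 0 ≤ 2 * x)]

end Real

theorem mul_add_one_le_div_mul_add {x c h : ℝ} (hx : 0 ≤ x) (hc₀ : 0 < c) (hc₁ : c ≤ 1)
    (hh : 0 ≤ h) : x * (h + 1) ≤ x / c * (h + c) := by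
  rw [div_mul_eq_mul_div, le_div_iff₀ hc₀]
  nlinarith [mul_nonneg hx (mul_nonneg hh (sub_nonneg.2 hc₁))]

theorem sq_mul_add_le_four_mul {a k σ R : ℝ} (ha : 0 < a) (hσ₀ : 0 ≤ σ) (hσ : σ ≤ 2 * a)
    (hR : 2 ≤ R) :
    k ^ 2 * (σ + a * R) ^ 2 ≤ 4 * (a ^ 2 * R) * (a ^ 2 * R - (a * σ - k ^ 2 * R)) := by
  have hR' : 0 ≤ (R - 2) * (4 * a ^ 4 * R + a ^ 2 * k ^ 2 * (3 * R + 2)) :=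
    mul_nonneg (by linarith) (by positivity)
  have hσ' : 0 ≤ (2 * a - σ) * (4 * a ^ 3 * R + 2 * a * k ^ 2 * R + k ^ 2 * (2 * a + σ)) :=
    mul_nonneg (by linarith) (by positivity)
  nlinarith

theorem im_sq_le_four_mul_mul_sub_re {w : ℂ} {a k σ S R D m : ℝ} (ha : 0 < a) (hσ₀ : 0 ≤ σ)
    (hσ : σ ≤ 2 * a) (hS : S = k * R) (hR : 2 ≤ R) (hD : 0 < D) (hm : a ^ 2 * R ≤ m * D)
    (hre : w.re = (a * σ - k * S) / D) (him : w.im = -(k * σ + a * S) / D) :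
    w.im ^ 2 ≤ 4 * m * (m - w.re) := by
  set n := a ^ 2 * R
  set c := a * σ - k ^ 2 * R
  have hc : c ≤ 2 * n := by
    nlinarith [mul_le_mul_of_nonneg_left hσ ha.le, mul_nonneg (sq_nonneg k) (by linarith : 0 ≤ R),
      mul_nonneg (sq_nonneg a) (by linarith : 0 ≤ R - 1)]
  -- `x ↦ x (x - c)` is increasing for `x ≥ c / 2`, so `n` may be replaced by `m D ≥ n`
  have hmono : n * (n - c) ≤ m * D * (m * D - c) := by nlinarith
  have hre' : w.re = c / D := by rw [hre, hS]; ring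
  have him' : w.im ^ 2 = k ^ 2 * (σ + a * R) ^ 2 / D ^ 2 := by rw [him, hS]; ring
  have hscale : 4 * m * (m - c / D) = 4 * (m * D) * (m * D - c) / D ^ 2 := by field_simp
  rw [hre', him', hscale, div_le_div_iff_of_pos_right (by positivity)]
  linarith [sq_mul_add_le_four_mul (k := k) ha hσ₀ hσ hR]

/-- If `ξ = k + ia` with `k` real and `0 < a < π/4`, then
`0 < Re √(−ξ tanh ξ) ≤ (a/√(cos 2a)) √(tanh k / k)`,
where `tanh k / k` is interpreted as `1` at `k = 0`. -/
theorem re_sqrt_neg_xi_tanh_bound (a k : ℝ) (ha0 : 0 < a) (ha : a < π / 4) :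
    0 < ((-((k : ℂ) + a * Complex.I) * Complex.tanh ((k : ℂ) + a * Complex.I)) ^ ((1 : ℂ) / 2)).re ∧
    ((-((k : ℂ) + a * Complex.I) * Complex.tanh ((k : ℂ) + a * Complex.I)) ^ ((1 : ℂ) / 2)).re ≤
      (a / Real.sqrt (Real.cos (2 * a))) *
        Real.sqrt (if k = 0 then 1 else Real.tanh k / k) := by
  change _ ∧ _ ≤ a / √(cos (2 * a)) * √(tanhc k)
  refine ⟨Complex.cpow_one_half_re_pos
    (Complex.neg_mul_tanh_add_mul_I_mem_slitPlane k ha0 (by linarith)), ?_⟩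
  have hC : 0 < cos (2 * a) := cos_pos_of_mem_Ioo ⟨by linarith, by linarith⟩
  have hσ₀ : 0 ≤ sin (2 * a) := sin_nonneg_of_nonneg_of_le_pi (by linarith) (by linarith [pi_pos])
  have hσ : sin (2 * a) ≤ 2 * a := (sin_lt (by linarith)).le
  have hR := two_le_tanhc_mul k
  have hρ : 0 < tanhc k :=
    pos_of_mul_pos_left (two_pos.trans_le hR) (by linarith [one_le_cosh (2 * k)])
  have hM : a / √(cos (2 * a)) * √(tanhc k) = √(a ^ 2 * tanhc k / cos (2 * a)) := by
    rw [sqrt_div' _ hC.le, sqrt_mul' _ hρ.le, sqrt_sq ha0.le, div_mul_eq_mul_div]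
  rw [hM]
  refine Complex.cpow_one_half_re_le_sqrt (by positivity)
    (im_sq_le_four_mul_mul_sub_re ha0 hσ₀ hσ (sinh_two_mul_eq_mul_tanhc_mul k) hR
      (by linarith [one_le_cosh (2 * k)]) ?_
      (Complex.neg_mul_tanh_add_mul_I_re k a) (Complex.neg_mul_tanh_add_mul_I_im k a))
  rw [← mul_assoc]
  exact mul_add_one_le_div_mul_add (by positivity) hC (cos_le_one _)
    (zero_le_one.trans (one_le_cosh _))
end

section
/- The function Q(k) = √(−(k+ia) tanh(k+ia)) on ℝ (for fixed a with 0 ≤ a < π/4) satisfies a weighted Lipschitz estimate: there is a constant K such that for all real k, k̂, |Q(k) − Q(k̂)| ≤ K |k − k̂| / max(1, |k̂ + ia|^{1/2}). -/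
/-!
Write `Q = w ^ (1/2)` with `w(z) = -(z + ia) tanh (z + ia)`. For real `k`,
`‖sinh (k + ia)‖² = sinh² k + sin² a` and `‖cosh (k + ia)‖² = sinh² k + cos² a`, so `‖tanh‖ ≤ 1` for
`a ≤ π/4` and `‖Q k‖ ≤ √(1 + |k|)`; this alone gives the estimate when `|k - k̂| ≥ (1 + |k̂|)/2`.
Otherwise every `t` between `k` and `k̂` has `1 + |k̂| ≤ 2 (1 + |t|)`, and by the mean value theorem
it suffices to bound `‖Q' t‖ √(1 + |t|)`. For `a > 0`, `w(t)` stays off the branch cut,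
`‖w' t‖ ≤ 4` and `‖w t‖ ≥ (a sin a / 2) (1 + |t|)`, so `Q' = w' / (2 Q)` is bounded as required.
For `a = 0`, `Q k = i √(k tanh k)` is not differentiable at `0`: the mean value theorem is used only
when `k` and `k̂` have the same sign, and otherwise `|Q k - Q k̂| ≤ |k| + |k̂| = |k - k̂|` with
`|k̂| ≤ 1`.
-/

open Real
open Complex (I normSq slitPlane)
open ComplexConjugate

lemma Real.sin_sq_le_cos_sq_of_abs_le {a : ℝ} (h : |a| ≤ π / 4) : sin a ^ 2 ≤ cos a ^ 2 := by
  rw [← sub_nonneg, ← cos_two_mul']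
  rw [abs_le] at h
  exact cos_nonneg_of_neg_pi_div_two_le_of_le (by linarith) (by linarith)

lemma Real.mul_sinh_nonneg (x : ℝ) : 0 ≤ x * sinh x := by
  rcases le_total 0 x with hx | hx
  · exact mul_nonneg hx (sinh_nonneg_iff.2 hx)
  · exact mul_nonneg_of_nonpos_of_nonpos hx (sinh_nonpos_iff.2 hx)

lemma Real.abs_sinh_le_abs_mul_cosh (x : ℝ) : |sinh x| ≤ |x| * cosh x := by
  have hd : ∀ t, HasDerivAt (fun t => t * cosh t - sinh t) (t * sinh t) t := fun t =>
    (((hasDerivAt_id t).mul (hasDerivAt_cosh t)).sub (hasDerivAt_sinh t)).congr_deriv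
      (by simp only [id]; ring)
  have hmono : Monotone (fun t => t * cosh t - sinh t) :=
    monotone_of_deriv_nonneg (fun t => (hd t).differentiableAt)
      (fun t => (hd t).deriv ▸ mul_sinh_nonneg t)
  rcases le_total 0 x with hx | hx
  · have := hmono hx
    simp only [zero_mul, sinh_zero, sub_zero] at this
    rw [abs_of_nonneg hx, abs_of_nonneg (sinh_nonneg_iff.2 hx)]
    linarith
  · have := hmono hx
    simp only [zero_mul, sinh_zero, sub_zero] at this
    rw [abs_of_nonpos hx, abs_of_nonpos (sinh_nonpos_iff.2 hx)]
    linarith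

lemma Real.abs_tanh_le_abs (x : ℝ) : |tanh x| ≤ |x| := by
  rw [tanh_eq_sinh_div_cosh, abs_div, abs_of_pos (cosh_pos x), div_le_iff₀ (cosh_pos x)]
  exact abs_sinh_le_abs_mul_cosh x

lemma Real.mul_tanh_nonneg (x : ℝ) : 0 ≤ x * tanh x := by
  rw [tanh_eq_sinh_div_cosh, ← mul_div_assoc]
  exact div_nonneg (mul_sinh_nonneg x) (cosh_pos x).le

lemma Real.mul_tanh_pos {x : ℝ} (hx : x ≠ 0) : 0 < x * tanh x := by
  refine (mul_tanh_nonneg x).lt_of_ne (Ne.symm (mul_ne_zero hx ?_))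
  rw [tanh_eq_sinh_div_cosh]
  refine div_ne_zero ?_ (cosh_pos x).ne'
  rw [← sinh_zero]
  exact sinh_injective.ne hx

lemma Real.sqrt_mul_tanh_le_abs (x : ℝ) : √(x * tanh x) ≤ |x| := by
  rw [sqrt_le_left (abs_nonneg x), sq_abs, sq]
  calc x * tanh x ≤ |x * tanh x| := le_abs_self _
    _ = |x| * |tanh x| := abs_mul _ _
    _ ≤ |x| * |x| := mul_le_mul_of_nonneg_left (abs_tanh_le_abs x) (abs_nonneg x)
    _ = x * x := abs_mul_abs_self x

lemma Real.hasDerivAt_tanh (x : ℝ) : HasDerivAt tanh (1 / cosh x ^ 2) x := by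
  rw [show tanh = sinh / cosh from funext tanh_eq_sinh_div_cosh, ← cosh_sq_sub_sinh_sq x]
  exact ((hasDerivAt_sinh x).div (hasDerivAt_cosh x) (cosh_pos x).ne').congr_deriv (by ring)

lemma Real.abs_tanh_add_div_cosh_sq_le (x : ℝ) : |tanh x + x / cosh x ^ 2| ≤ 2 * |tanh x| := by
  have hc := cosh_pos x
  have hfrac : |x / cosh x ^ 2| ≤ |tanh x| := by
    rw [abs_div, abs_of_pos (pow_pos hc 2), tanh_eq_sinh_div_cosh, abs_div, abs_of_pos hc,
      div_le_div_iff₀ (pow_pos hc 2) hc]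
    have hsinh : |x| ≤ |sinh x| := by
      rw [abs_sinh]; exact self_le_sinh_iff.2 (abs_nonneg x)
    have := one_le_cosh x
    calc |x| * cosh x ≤ |sinh x| * (cosh x * cosh x) := by gcongr; nlinarith
      _ = |sinh x| * cosh x ^ 2 := by ring
  linarith [abs_add_le (tanh x) (x / cosh x ^ 2)]

lemma Real.hasDerivAt_sqrt_mul_tanh {x : ℝ} (hx : x ≠ 0) :
    HasDerivAt (fun t => √(t * tanh t)) ((tanh x + x / cosh x ^ 2) / (2 * √(x * tanh x))) x :=
  (((hasDerivAt_id x).mul (hasDerivAt_tanh x)).congr_deriv (by simp only [id]; ring)).sqrt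
    (mul_tanh_pos hx).ne'

lemma Real.abs_deriv_sqrt_mul_tanh_mul_sqrt_le {x : ℝ} (hx : x ≠ 0) :
    |deriv (fun t => √(t * tanh t)) x| * √(1 + |x|) ≤ 2 := by
  set T := |tanh x|
  have hT0 : 0 ≤ T := abs_nonneg _
  have hprod : x * tanh x = |x| * T := by rw [← abs_mul, abs_of_nonneg (mul_tanh_nonneg x)]
  have hs : 0 < √(x * tanh x) := sqrt_pos.2 (mul_tanh_pos hx)
  have hkey : T * √(1 + |x|) ≤ 2 * √(x * tanh x) := by
    calc T * √(1 + |x|) = √(T ^ 2 * (1 + |x|)) := by rw [sqrt_mul (sq_nonneg _), sqrt_sq hT0]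
      _ ≤ √(2 ^ 2 * (x * tanh x)) := by
          apply sqrt_le_sqrt
          rw [hprod]
          nlinarith [mul_le_mul_of_nonneg_left (abs_tanh_le_abs x) hT0,
            mul_le_mul_of_nonneg_right (abs_tanh_lt_one x).le (abs_nonneg x)]
      _ = 2 * √(x * tanh x) := by rw [sqrt_mul (sq_nonneg _), sqrt_sq zero_le_two]
  rw [(hasDerivAt_sqrt_mul_tanh hx).deriv, abs_div, abs_of_pos (mul_pos two_pos hs),
    div_mul_eq_mul_div, div_le_iff₀ (mul_pos two_pos hs)]
  calc |tanh x + x / cosh x ^ 2| * √(1 + |x|) ≤ 2 * T * √(1 + |x|) := by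
        gcongr; exact abs_tanh_add_div_cosh_sq_le x
    _ ≤ 2 * (2 * √(x * tanh x)) := by rw [mul_assoc]; gcongr

lemma Complex.sinh_ofReal_add_mul_I (k a : ℝ) :
    sinh (k + a * I) = (Real.sinh k * Real.cos a : ℝ) + (Real.cosh k * Real.sin a : ℝ) * I := by
  rw [sinh_add, sinh_mul_I, cosh_mul_I]
  push_cast
  ring

lemma Complex.cosh_ofReal_add_mul_I (k a : ℝ) :
    cosh (k + a * I) = (Real.cosh k * Real.cos a : ℝ) + (Real.sinh k * Real.sin a : ℝ) * I := by
  rw [cosh_add, sinh_mul_I, cosh_mul_I]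
  push_cast
  ring

lemma Complex.normSq_sinh_ofReal_add_mul_I (k a : ℝ) :
    normSq (sinh (k + a * I)) = Real.sinh k ^ 2 + Real.sin a ^ 2 := by
  rw [sinh_ofReal_add_mul_I, normSq_add_mul_I]
  linear_combination Real.sinh k ^ 2 * Real.cos_sq_add_sin_sq a + Real.sin a ^ 2 * Real.cosh_sq k

lemma Complex.normSq_cosh_ofReal_add_mul_I (k a : ℝ) :
    normSq (cosh (k + a * I)) = Real.sinh k ^ 2 + Real.cos a ^ 2 := by
  rw [cosh_ofReal_add_mul_I, normSq_add_mul_I]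
  linear_combination Real.sinh k ^ 2 * Real.sin_sq_add_cos_sq a + Real.cos a ^ 2 * Real.cosh_sq k

lemma Complex.sinh_mul_conj_cosh_ofReal_add_mul_I (k a : ℝ) :
    sinh (k + a * I) * conj (cosh (k + a * I)) =
      (Real.sinh k * Real.cosh k : ℝ) + (Real.sin a * Real.cos a : ℝ) * I := by
  rw [sinh_ofReal_add_mul_I, cosh_ofReal_add_mul_I]
  apply Complex.ext <;>
    simp only [map_add, map_mul, conj_ofReal, conj_I, add_re, add_im, mul_re, mul_im, ofReal_re,
      ofReal_im, I_re, I_im, neg_re, neg_im]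
  · linear_combination Real.sinh k * Real.cosh k * Real.cos_sq_add_sin_sq a
  · linear_combination Real.sin a * Real.cos a * Real.cosh_sq k

lemma Complex.tanh_ofReal_add_mul_I (k a : ℝ) :
    tanh (k + a * I) = ((Real.sinh k * Real.cosh k : ℝ) + (Real.sin a * Real.cos a : ℝ) * I) /
      (Real.sinh k ^ 2 + Real.cos a ^ 2 : ℝ) := by
  rw [tanh_eq_sinh_div_cosh, div_eq_mul_inv, inv_def, ← mul_assoc,
    sinh_mul_conj_cosh_ofReal_add_mul_I, normSq_cosh_ofReal_add_mul_I, ofReal_inv, div_eq_mul_inv]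

lemma Complex.cosh_ofReal_add_mul_I_ne_zero (k : ℝ) {a : ℝ} (ha : Real.cos a ≠ 0) :
    cosh (k + a * I) ≠ 0 := by
  rw [← normSq_pos, normSq_cosh_ofReal_add_mul_I]
  positivity

lemma Complex.norm_tanh_ofReal_add_mul_I_le_one (k : ℝ) {a : ℝ}
    (ha : Real.sin a ^ 2 ≤ Real.cos a ^ 2) : ‖tanh (k + a * I)‖ ≤ 1 := by
  rw [tanh_eq_sinh_div_cosh, norm_div]
  refine div_le_one_of_le₀ ?_ (norm_nonneg _)
  rw [← sq_le_sq₀ (norm_nonneg _) (norm_nonneg _), ← normSq_eq_norm_sq, ← normSq_eq_norm_sq,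
    normSq_sinh_ofReal_add_mul_I, normSq_cosh_ofReal_add_mul_I]
  linarith

lemma Complex.abs_sin_le_norm_tanh_ofReal_add_mul_I (k : ℝ) {a : ℝ} (ha : Real.cos a ≠ 0) :
    |Real.sin a| ≤ ‖tanh (k + a * I)‖ := by
  rw [tanh_eq_sinh_div_cosh, norm_div,
    le_div_iff₀ (norm_pos_iff.2 (cosh_ofReal_add_mul_I_ne_zero k ha)),
    ← sq_le_sq₀ (by positivity) (norm_nonneg _), mul_pow, sq_abs, ← normSq_eq_norm_sq,
    ← normSq_eq_norm_sq, normSq_sinh_ofReal_add_mul_I, normSq_cosh_ofReal_add_mul_I]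
  nlinarith [Real.sin_sq_add_cos_sq a, sq_nonneg (Real.sinh k), sq_nonneg (Real.sin a)]

lemma Complex.norm_ofReal_add_mul_I_le (k a : ℝ) : ‖(k : ℂ) + a * I‖ ≤ |k| + |a| :=
  (norm_add_le _ _).trans (by simp)

lemma Complex.hasDerivAt_tanh {z : ℂ} (h : cosh z ≠ 0) : HasDerivAt tanh (1 / cosh z ^ 2) z := by
  rw [show tanh = sinh / cosh from funext tanh_eq_sinh_div_cosh, ← cosh_sq_sub_sinh_sq z]
  exact ((hasDerivAt_sinh z).div (hasDerivAt_cosh z) h).congr_deriv (by ring)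

section WeightedLipschitz

variable {E : Type*} [NormedAddCommGroup E] {f : ℝ → E} {x y : ℝ}

lemma one_add_abs_le_two_mul_of_mem_uIcc {t : ℝ} (ht : t ∈ Set.uIcc x y)
    (hxy : |x - y| ≤ (1 + |y|) / 2) : 1 + |y| ≤ 2 * (1 + |t|) := by
  have hty : |y - t| ≤ |y - x| := Set.abs_sub_right_of_mem_uIcc (Set.uIcc_comm x y ▸ ht)
  rw [abs_sub_comm y x] at hty
  linarith [abs_sub_abs_le_abs_sub y t]

lemma norm_sub_mul_sqrt_le_of_deriv [NormedSpace ℝ E] {B : ℝ}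
    (hf : ∀ t ∈ Set.uIcc x y, DifferentiableAt ℝ f t)
    (hB : ∀ t ∈ Set.uIcc x y, ‖deriv f t‖ * √(1 + |t|) ≤ B) (hxy : |x - y| ≤ (1 + |y|) / 2) :
    ‖f x - f y‖ * √(1 + |y|) ≤ 2 * B * |x - y| := by
  have hy : 0 < √(1 + |y|) := Real.sqrt_pos.2 (by positivity)
  have hbound : ∀ t ∈ Set.uIcc x y, ‖deriv f t‖ ≤ 2 * B / √(1 + |y|) := fun t ht => by
    have hw : √(1 + |y|) ≤ 2 * √(1 + |t|) := by
      calc √(1 + |y|) ≤ √(2 ^ 2 * (1 + |t|)) :=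
            Real.sqrt_le_sqrt
              (by linarith [one_add_abs_le_two_mul_of_mem_uIcc ht hxy, abs_nonneg t])
        _ = 2 * √(1 + |t|) := by rw [Real.sqrt_mul (sq_nonneg _), Real.sqrt_sq zero_le_two]
    rw [le_div_iff₀ hy]
    calc ‖deriv f t‖ * √(1 + |y|) ≤ ‖deriv f t‖ * (2 * √(1 + |t|)) := by gcongr
      _ = 2 * (‖deriv f t‖ * √(1 + |t|)) := by ring
      _ ≤ 2 * B := by gcongr; exact hB t ht
  have hmvt := Convex.norm_image_sub_le_of_norm_deriv_le hf hbound (convex_uIcc x y)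
    Set.right_mem_uIcc Set.left_mem_uIcc
  rw [Real.norm_eq_abs, div_mul_eq_mul_div, le_div_iff₀ hy] at hmvt
  linarith

lemma norm_sub_mul_sqrt_le_of_norm_le {A : ℝ} (hx : ‖f x‖ ≤ A * √(1 + |x|))
    (hy : ‖f y‖ ≤ A * √(1 + |y|)) (hxy : (1 + |y|) / 2 ≤ |x - y|) :
    ‖f x - f y‖ * √(1 + |y|) ≤ 5 * A * |x - y| := by
  have hA : 0 ≤ A := nonneg_of_mul_nonneg_left ((norm_nonneg _).trans hy) (by positivity)
  have hsx : √(1 + |x|) * √(1 + |y|) ≤ 3 * |x - y| := by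
    rw [← Real.sqrt_mul (by positivity), Real.sqrt_le_left (by positivity)]
    nlinarith [abs_nonneg y, abs_sub_abs_le_abs_sub x y]
  have hsy : √(1 + |y|) * √(1 + |y|) ≤ 2 * |x - y| := by
    rw [Real.mul_self_sqrt (by positivity)]
    linarith
  calc ‖f x - f y‖ * √(1 + |y|) ≤ (‖f x‖ + ‖f y‖) * √(1 + |y|) := by
        gcongr; exact norm_sub_le _ _
    _ ≤ (A * √(1 + |x|) + A * √(1 + |y|)) * √(1 + |y|) := by gcongr
    _ = A * (√(1 + |x|) * √(1 + |y|) + √(1 + |y|) * √(1 + |y|)) := by ring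
    _ ≤ A * (3 * |x - y| + 2 * |x - y|) := by gcongr
    _ = 5 * A * |x - y| := by ring

lemma norm_sub_mul_sqrt_le {A B : ℝ} (hf : ∀ t, ‖f t‖ ≤ A * √(1 + |t|))
    (hloc : ∀ x y, |x - y| ≤ (1 + |y|) / 2 → ‖f x - f y‖ * √(1 + |y|) ≤ B * |x - y|) (x y : ℝ) :
    ‖f x - f y‖ * √(1 + |y|) ≤ max (5 * A) B * |x - y| := by
  rcases le_total |x - y| ((1 + |y|) / 2) with hxy | hxy
  · exact (hloc x y hxy).trans (by gcongr; exact le_max_right _ _)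
  · exact (norm_sub_mul_sqrt_le_of_norm_le (hf x) (hf y) hxy).trans
      (by gcongr; exact le_max_left _ _)

end WeightedLipschitz

noncomputable def radicand (a : ℝ) (z : ℂ) : ℂ := -(z + a * I) * Complex.tanh (z + a * I)

noncomputable def Q (a k : ℝ) : ℂ := radicand a k ^ ((1 : ℂ) / 2)

lemma norm_Q (a k : ℝ) : ‖Q a k‖ = √‖radicand a k‖ := by
  rw [Q, show (1 : ℂ) / 2 = ((1 / 2 : ℝ) : ℂ) by push_cast; rfl, Complex.norm_cpow_real,
    Real.sqrt_eq_rpow]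

lemma norm_radicand_le (k : ℝ) {a : ℝ} (ha : |a| ≤ 1) (hsc : sin a ^ 2 ≤ cos a ^ 2) :
    ‖radicand a k‖ ≤ 1 + |k| := by
  rw [radicand, norm_mul, norm_neg]
  calc ‖(k : ℂ) + a * I‖ * ‖Complex.tanh (k + a * I)‖ ≤ (|k| + |a|) * 1 := by
        gcongr
        · exact Complex.norm_ofReal_add_mul_I_le k a
        · exact Complex.norm_tanh_ofReal_add_mul_I_le_one k hsc
    _ ≤ 1 + |k| := by linarith

lemma norm_Q_le (k : ℝ) {a : ℝ} (ha : |a| ≤ 1) (hsc : sin a ^ 2 ≤ cos a ^ 2) :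
    ‖Q a k‖ ≤ √(1 + |k|) := by
  rw [norm_Q]
  exact Real.sqrt_le_sqrt (norm_radicand_le k ha hsc)

lemma le_norm_radicand (k : ℝ) {a : ℝ} (ha0 : 0 ≤ a) (ha1 : a ≤ 1) (hcos : cos a ≠ 0) :
    a * |sin a| / 2 * (1 + |k|) ≤ ‖radicand a k‖ := by
  have hk : |k| ≤ ‖(k : ℂ) + a * I‖ := by simpa using Complex.abs_re_le_norm ((k : ℂ) + a * I)
  have ha : a ≤ ‖(k : ℂ) + a * I‖ := by
    simpa [abs_of_nonneg ha0] using Complex.abs_im_le_norm ((k : ℂ) + a * I)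
  have hz : a * (1 + |k|) / 2 ≤ ‖(k : ℂ) + a * I‖ := by nlinarith [abs_nonneg k]
  rw [radicand, norm_mul, norm_neg]
  calc a * |sin a| / 2 * (1 + |k|) = a * (1 + |k|) / 2 * |sin a| := by ring
    _ ≤ ‖(k : ℂ) + a * I‖ * ‖Complex.tanh (k + a * I)‖ := by
        gcongr
        exact Complex.abs_sin_le_norm_tanh_ofReal_add_mul_I k hcos

/-- `Im (radicand a k)` has the sign of `-k`, and `radicand a 0 = a tan a > 0`. -/
lemma radicand_mem_slitPlane (k : ℝ) {a : ℝ} (ha : 0 < a) (ha' : a < π / 2) :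
    radicand a k ∈ slitPlane := by
  have hsin : 0 < sin a := sin_pos_of_pos_of_lt_pi ha (by linarith [pi_pos])
  have hcos : 0 < cos a := cos_pos_of_mem_Ioo ⟨by linarith [pi_pos], ha'⟩
  have hN : 0 < sinh k ^ 2 + cos a ^ 2 := by positivity
  rw [radicand, Complex.tanh_ofReal_add_mul_I, ← mul_div_assoc, Complex.mem_slitPlane_iff,
    Complex.div_ofReal_re, Complex.div_ofReal_im]
  simp only [Complex.mul_re, Complex.mul_im, Complex.neg_re, Complex.neg_im, Complex.add_re,
    Complex.add_im, Complex.ofReal_re, Complex.ofReal_im, Complex.I_re, Complex.I_im, mul_zero,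
    mul_one, add_zero, zero_add, sub_zero]
  rcases eq_or_ne k 0 with rfl | hk
  · left
    simp only [sinh_zero, zero_mul, neg_zero, neg_mul, neg_neg, zero_sub]
    positivity
  · right
    refine div_ne_zero (fun h => ?_) hN.ne'
    have hks : 0 ≤ k * (sinh k * cosh k) := by
      rw [← mul_assoc]; exact mul_nonneg (mul_sinh_nonneg k) (cosh_pos k).le
    have hpos : 0 < k * (k * (sin a * cos a) + a * (sinh k * cosh k)) := by
      nlinarith [mul_pos (mul_self_pos.2 hk) (mul_pos hsin hcos), mul_nonneg ha.le hks]
    rw [show k * (sin a * cos a) + a * (sinh k * cosh k) = 0 by linarith, mul_zero] at hpos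
    exact hpos.false

lemma hasDerivAt_radicand (a : ℝ) {z : ℂ} (h : Complex.cosh (z + a * I) ≠ 0) :
    HasDerivAt (radicand a)
      (-(Complex.tanh (z + a * I) + (z + a * I) / Complex.cosh (z + a * I) ^ 2)) z := by
  have hz := (hasDerivAt_id z).add_const ((a : ℂ) * I)
  have ht := (Complex.hasDerivAt_tanh h).comp z hz
  exact (hz.neg.mul ht).congr_deriv
    (by simp only [Pi.neg_apply, Function.comp_apply, id]; ring)

lemma norm_tanh_add_div_cosh_sq_le (k : ℝ) {a : ℝ} (ha : |a| ≤ 1) (hsc : sin a ^ 2 ≤ cos a ^ 2) :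
    ‖Complex.tanh (k + a * I) + (k + a * I) / Complex.cosh (k + a * I) ^ 2‖ ≤ 4 := by
  have hcos : 1 / 2 ≤ cos a ^ 2 := by nlinarith [sin_sq_add_cos_sq a]
  have hsinh : |k| ≤ |sinh k| := by rw [abs_sinh]; exact self_le_sinh_iff.2 (abs_nonneg k)
  have hfrac : ‖((k : ℂ) + a * I) / Complex.cosh (k + a * I) ^ 2‖ ≤ 3 := by
    rw [norm_div, norm_pow, ← Complex.normSq_eq_norm_sq, Complex.normSq_cosh_ofReal_add_mul_I,
      div_le_iff₀ (by positivity)]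
    nlinarith [Complex.norm_ofReal_add_mul_I_le k a, sq_abs (sinh k),
      sq_nonneg (|sinh k| - 1 / 3)]
  linarith [norm_add_le (Complex.tanh (k + a * I)) ((k + a * I) / Complex.cosh (k + a * I) ^ 2),
    Complex.norm_tanh_ofReal_add_mul_I_le_one k hsc]

lemma hasDerivAt_Q (k : ℝ) {a : ℝ} (ha : 0 < a) (ha' : a < π / 2) :
    HasDerivAt (Q a) (1 / 2 * radicand a k ^ ((1 : ℂ) / 2 - 1) *
      -(Complex.tanh (k + a * I) + (k + a * I) / Complex.cosh (k + a * I) ^ 2)) k :=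
  ((hasDerivAt_radicand a (Complex.cosh_ofReal_add_mul_I_ne_zero k
    (cos_pos_of_mem_Ioo ⟨by linarith [pi_pos], ha'⟩).ne')).cpow_const
    (radicand_mem_slitPlane k ha ha')).comp_ofReal

lemma norm_deriv_Q_mul_sqrt_le (k : ℝ) {a : ℝ} (ha0 : 0 < a) (ha : a ≤ π / 4) :
    ‖deriv (Q a) k‖ * √(1 + |k|) ≤ 2 / √(a * sin a / 2) := by
  have ha1 : a ≤ 1 := by linarith [pi_le_four]
  have hsin : 0 < sin a := sin_pos_of_pos_of_lt_pi ha0 (by linarith [pi_pos])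
  have hsc : sin a ^ 2 ≤ cos a ^ 2 := sin_sq_le_cos_sq_of_abs_le (by rwa [abs_of_pos ha0])
  have hc : 0 < √(a * sin a / 2) := Real.sqrt_pos.2 (by positivity)
  have hw : √(a * sin a / 2) * √(1 + |k|) ≤ √‖radicand a k‖ := by
    rw [← Real.sqrt_mul (by positivity)]
    have := le_norm_radicand k ha0.le ha1 (by nlinarith [sin_sq_add_cos_sq a])
    rw [abs_of_pos hsin] at this
    exact Real.sqrt_le_sqrt this
  have hw0 : 0 < √‖radicand a k‖ := Real.sqrt_pos.2
    (norm_pos_iff.2 (Complex.slitPlane_ne_zero (radicand_mem_slitPlane k ha0 (by linarith))))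
  have hratio : √(1 + |k|) / √‖radicand a k‖ ≤ 1 / √(a * sin a / 2) := by
    rw [div_le_div_iff₀ hw0 hc]
    linarith
  have hd := norm_tanh_add_div_cosh_sq_le k (by rwa [abs_of_pos ha0]) hsc
  rw [(hasDerivAt_Q k ha0 (by linarith)).deriv, norm_mul, norm_mul, norm_neg,
    show (1 : ℂ) / 2 - 1 = ((-(1 / 2) : ℝ) : ℂ) by push_cast; norm_num, Complex.norm_cpow_real,
    Real.rpow_neg (norm_nonneg _), ← Real.sqrt_eq_rpow]
  calc ‖(1 : ℂ) / 2‖ * (√‖radicand a k‖)⁻¹ *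
        ‖Complex.tanh (k + a * I) + (k + a * I) / Complex.cosh (k + a * I) ^ 2‖ * √(1 + |k|)
      = ‖Complex.tanh (k + a * I) + (k + a * I) / Complex.cosh (k + a * I) ^ 2‖ / 2 *
        (√(1 + |k|) / √‖radicand a k‖) := by
        rw [norm_div, norm_one, Complex.norm_two]; ring
    _ ≤ 4 / 2 * (1 / √(a * sin a / 2)) :=
        mul_le_mul (by gcongr) hratio (by positivity) (by norm_num)
    _ = 2 / √(a * sin a / 2) := by ring

lemma Q_local_bound_of_pos {a : ℝ} (ha0 : 0 < a) (ha : a ≤ π / 4) {x y : ℝ}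
    (hxy : |x - y| ≤ (1 + |y|) / 2) :
    ‖Q a x - Q a y‖ * √(1 + |y|) ≤ 2 * (2 / √(a * sin a / 2)) * |x - y| :=
  norm_sub_mul_sqrt_le_of_deriv
    (fun t _ => (hasDerivAt_Q t ha0 (by linarith [pi_pos])).differentiableAt)
    (fun t _ => norm_deriv_Q_mul_sqrt_le t ha0 ha) hxy

lemma Q_zero (k : ℝ) : Q 0 k = I * √(k * tanh k) := by
  have hr : radicand 0 k = ((-(k * tanh k) : ℝ) : ℂ) := by simp [radicand, Complex.ofReal_tanh]
  have hexp : Complex.exp (π * I * ((1 : ℂ) / 2)) = I := by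
    convert Complex.exp_pi_div_two_mul_I using 2; ring
  rw [Q, hr, Complex.ofReal_cpow_of_nonpos (neg_nonpos.2 (mul_tanh_nonneg k)), Complex.ofReal_neg,
    neg_neg, hexp, show (1 : ℂ) / 2 = ((1 / 2 : ℝ) : ℂ) by push_cast; rfl,
    ← Complex.ofReal_cpow (mul_tanh_nonneg k), ← Real.sqrt_eq_rpow, mul_comm]

lemma Q_zero_local_bound {x y : ℝ} (hxy : |x - y| ≤ (1 + |y|) / 2) :
    ‖Q 0 x - Q 0 y‖ * √(1 + |y|) ≤ 4 * |x - y| := by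
  rw [Q_zero, Q_zero, ← mul_sub, norm_mul, Complex.norm_I, one_mul, ← Complex.ofReal_sub,
    Complex.norm_real]
  rcases lt_or_ge 0 (x * y) with hsame | hopp
  · have hne : ∀ t ∈ Set.uIcc x y, t ≠ 0 := by
      rintro t ht rfl
      rcases Set.mem_uIcc.1 ht with ⟨h1, h2⟩ | ⟨h1, h2⟩ <;> nlinarith
    have := norm_sub_mul_sqrt_le_of_deriv (f := fun t => √(t * tanh t))
      (fun t ht => (hasDerivAt_sqrt_mul_tanh (hne t ht)).differentiableAt)
      (fun t ht => abs_deriv_sqrt_mul_tanh_mul_sqrt_le (hne t ht)) hxy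
    linarith
  · have hsum : |x - y| = |x| + |y| := by
      have : (x - y) ^ 2 = (|x| + |y|) ^ 2 := by
        rw [add_sq, sq_abs, sq_abs, mul_assoc, ← abs_mul, abs_of_nonpos hopp]; ring
      rw [← Real.sqrt_sq_eq_abs, this, Real.sqrt_sq (by positivity)]
    have hsqrt : √(1 + |y|) ≤ 2 := by
      rw [Real.sqrt_le_left zero_le_two]; linarith [abs_nonneg x]
    have hdiff : ‖√(x * tanh x) - √(y * tanh y)‖ ≤ |x| + |y| := by
      refine (norm_sub_le _ _).trans ?_
      rw [Real.norm_of_nonneg (Real.sqrt_nonneg _), Real.norm_of_nonneg (Real.sqrt_nonneg _)]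
      exact add_le_add (sqrt_mul_tanh_le_abs x) (sqrt_mul_tanh_le_abs y)
    calc ‖√(x * tanh x) - √(y * tanh y)‖ * √(1 + |y|) ≤ (|x| + |y|) * 2 :=
          mul_le_mul hdiff hsqrt (Real.sqrt_nonneg _) (by positivity)
      _ ≤ 4 * |x - y| := by rw [hsum]; linarith [abs_nonneg x, abs_nonneg y]

lemma exists_Q_local_bound {a : ℝ} (ha0 : 0 ≤ a) (ha : a ≤ π / 4) : ∃ B, ∀ x y,
    |x - y| ≤ (1 + |y|) / 2 → ‖Q a x - Q a y‖ * √(1 + |y|) ≤ B * |x - y| := by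
  rcases ha0.eq_or_lt with rfl | ha0
  · exact ⟨4, fun _ _ => Q_zero_local_bound⟩
  · exact ⟨_, fun _ _ => Q_local_bound_of_pos ha0 ha⟩

/-- The function `Q(k) = √(−(k+ia) tanh(k+ia))` on `ℝ` (principal square root,
`0 ≤ a < π/4`) satisfies the weighted Lipschitz estimate
`|Q(k) − Q(k̂)| ≤ K |k − k̂| / max(1, |k̂ + ia|^{1/2})`. -/
theorem Q_weighted_lipschitz (a : ℝ) (ha0 : 0 ≤ a) (ha : a < π / 4) :
    ∃ K : ℝ, ∀ k khat : ℝ,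
      ‖(-((k : ℂ) + a * Complex.I) * Complex.tanh ((k : ℂ) + a * Complex.I)) ^ ((1 : ℂ) / 2) -
           (-((khat : ℂ) + a * Complex.I) * Complex.tanh ((khat : ℂ) + a * Complex.I)) ^ ((1 : ℂ) / 2)‖ ≤
        K * |k - khat| / max 1 (Real.sqrt ‖(khat : ℂ) + a * Complex.I‖) := by
  obtain ⟨B, hB⟩ := exists_Q_local_bound ha0 ha.le
  have ha1 : |a| ≤ 1 := by rw [abs_of_nonneg ha0]; linarith [pi_le_four]
  have hsc := sin_sq_le_cos_sq_of_abs_le (by rw [abs_of_nonneg ha0]; exact ha.le)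
  refine ⟨max 5 B, fun k khat => ?_⟩
  have hweight : max 1 √‖(khat : ℂ) + a * I‖ ≤ √(1 + |khat|) :=
    max_le (Real.one_le_sqrt.2 (by linarith [abs_nonneg khat]))
      (Real.sqrt_le_sqrt (by linarith [Complex.norm_ofReal_add_mul_I_le khat a]))
  rw [le_div_iff₀ (one_pos.trans_le (le_max_left _ _))]
  calc ‖Q a k - Q a khat‖ * max 1 √‖(khat : ℂ) + a * I‖
      ≤ ‖Q a k - Q a khat‖ * √(1 + |khat|) := mul_le_mul_of_nonneg_left hweight (norm_nonneg _)
    _ ≤ max (5 * 1) B * |k - khat| :=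
        norm_sub_mul_sqrt_le (fun t => (norm_Q_le t ha1 hsc).trans_eq (one_mul _).symm) hB k khat
    _ = max 5 B * |k - khat| := by rw [mul_one]
end

section
/- If α ∈ (0,1) and λ ∈ ℂ with Re λ > −β where β = (α/2)(1 − α²/3), then the cubic equation λ − μ/2 + μ³/6 = 0 has exactly one root μ with Re μ < −α, and that root is simple. -/
/-- Key real inequality: if two of the three roots have real part ≤ -α,
then the real part of the product is at least 3α - α³. -/
lemma claimB (α r1 r2 r3 s1 s2 s3 : ℝ) (hα0 : 0 < α) (hα1 : α < 1)
    (h1 : r1 ≤ -α) (h2 : r2 ≤ -α)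
    (hr : r1 + r2 + r3 = 0) (hs : s1 + s2 + s3 = 0)
    (hC1 : r1^2 + r2^2 + r3^2 = s1^2 + s2^2 + s3^2 + 6)
    (hC2 : r1*s1 + r2*s2 + r3*s3 = 0) :
    3*α - α^3 ≤ r1*r2*r3 - r3*s1*s2 - r2*s1*s3 - r1*s2*s3 := by
  set a1 : ℝ := -r1 with ha1
  set a2 : ℝ := -r2 with ha2
  have hA1 : α ≤ a1 := by simp [ha1]; linarith
  have hA2 : α ≤ a2 := by simp [ha2]; linarith
  have hr3 : r3 = a1 + a2 := by simp [ha1, ha2]; linarith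
  have hs3 : s3 = -s1 - s2 := by linarith
  have hpos : 0 < a1 + a2 := by linarith
  -- from hC2 : (a1+a2) * s3 = a1*s1 + a2*s2
  have hc2' : (a1 + a2) * s3 = a1 * s1 + a2 * s2 := by
    rw [hr3] at hC2; simp only [ha1, ha2] at hC2 ⊢; linarith
  -- nonnegativity of the "imaginary" contribution
  have key1 : (a1 + a2) * (a1*s1^2 + a2*s2^2 - (a1+a2)*s3^2) = a1*a2*(s1-s2)^2 := by
    linear_combination (-(a1*s1 + a2*s2 + (a1+a2)*s3)) * hc2'
  have key1' : 0 ≤ a1*s1^2 + a2*s2^2 - (a1+a2)*s3^2 := by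
    have h := mul_nonneg (mul_nonneg (by linarith : (0:ℝ) ≤ a1) (by linarith : (0:ℝ) ≤ a2)) (sq_nonneg (s1 - s2))
    nlinarith [key1]
  -- from hC1 : a1² + a1a2 + a2² = 3 + (s1² + s1s2 + s2²) ≥ 3
  have hq : 3 ≤ a1^2 + a1*a2 + a2^2 := by
    have hD : 0 ≤ s1^2 + s1*s2 + s2^2 := by nlinarith [sq_nonneg (2*s1 + s2), sq_nonneg s2]
    rw [hr3, hs3] at hC1
    simp only [ha1, ha2] at hC1
    nlinarith [hC1]
  -- factorized inequality
  have hfact : 0 ≤ (a1 - α) * (a2 - α) * (a1 + a2 + α) := by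
    apply mul_nonneg (mul_nonneg (by linarith) (by linarith)) (by linarith)
  have hcube : 3*α - α^3 ≤ a1*a2*(a1+a2) := by nlinarith [hfact, hq, hα0.le]
  -- assemble: goal expression equals a1a2(a1+a2) + (a1s1² + a2s2² - (a1+a2)s3²)
  have hgoal : r1*r2*r3 - r3*s1*s2 - r2*s1*s3 - r1*s2*s3
      = a1*a2*(a1+a2) + (a1*s1^2 + a2*s2^2 - (a1+a2)*s3^2) := by
    rw [hr3, hs3]; simp only [ha1, ha2]; ring
  rw [hgoal]; linarith

/-- It is impossible that all three roots have real part ≥ -α. -/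
lemma claimA (α r1 r2 r3 s1 s2 s3 : ℝ) (hα0 : 0 < α) (hα1 : α < 1)
    (h1 : -α ≤ r1) (h2 : -α ≤ r2) (h3 : -α ≤ r3)
    (hr : r1 + r2 + r3 = 0)
    (hC1 : r1^2 + r2^2 + r3^2 = s1^2 + s2^2 + s3^2 + 6) : False := by
  have k1 : 0 ≤ (r1 + α) * (2*α - r1) := mul_nonneg (by linarith) (by linarith)
  have k2 : 0 ≤ (r2 + α) * (2*α - r2) := mul_nonneg (by linarith) (by linarith)
  have k3 : 0 ≤ (r3 + α) * (2*α - r3) := mul_nonneg (by linarith) (by linarith)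
  nlinarith [sq_nonneg s1, sq_nonneg s2, sq_nonneg s3, sq_nonneg (r1+r2+r3), mul_pos hα0 hα0]

lemma main_aux (α : ℝ) (hα0 : 0 < α) (hα1 : α < 1) (lam m1 m2 m3 : ℂ)
    (hlam : -((α / 2) * (1 - α ^ 2 / 3)) < lam.re)
    (key : ∀ μ : ℂ, lam - μ/2 + μ^3/6 = (μ - m1)*(μ - m2)*(μ - m3)/6)
    (hsum : m1 + m2 + m3 = 0)
    (he2 : m1*m2 + m1*m3 + m2*m3 = -3)
    (he3 : m1*m2*m3 = -6*lam)
    (h1 : m1.re < -α) :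
    ∃ mu : ℂ, mu.re < -α ∧ lam - mu / 2 + mu ^ 3 / 6 = 0 ∧
      (-(1 / 2) + mu ^ 2 / 2 ≠ 0) ∧
      ∀ mu' : ℂ, mu'.re < -α → lam - mu' / 2 + mu' ^ 3 / 6 = 0 → mu' = mu := by
  -- real constraints
  have hr : m1.re + m2.re + m3.re = 0 := by
    have := congrArg Complex.re hsum; simpa using this
  have hs : m1.im + m2.im + m3.im = 0 := by
    have := congrArg Complex.im hsum; simpa using this
  have hE2 := congrArg Complex.re he2
  have hE2' := congrArg Complex.im he2
  simp [Complex.add_re, Complex.mul_re, Complex.add_im, Complex.mul_im] at hE2 hE2'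
  have hC1 : m1.re^2 + m2.re^2 + m3.re^2 = m1.im^2 + m2.im^2 + m3.im^2 + 6 := by
    linear_combination (m1.re + m2.re + m3.re) * hr - (m1.im + m2.im + m3.im) * hs - 2 * hE2
  have hC2 : m1.re*m1.im + m2.re*m2.im + m3.re*m3.im = 0 := by
    linear_combination (m1.im + m2.im + m3.im) * hr - hE2'
  have hP := congrArg Complex.re he3
  simp [Complex.mul_re, Complex.mul_im] at hP
  have hroot1 : lam - m1 / 2 + m1 ^ 3 / 6 = 0 := by rw [key m1]; ring
  have hbound : -6 * lam.re < 3*α - α^3 := by nlinarith [hlam]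
  have contra : ∀ rA rB rC sA sB sC : ℝ, rA ≤ -α → rB ≤ -α →
      rA + rB + rC = 0 → sA + sB + sC = 0 →
      rA^2 + rB^2 + rC^2 = sA^2 + sB^2 + sC^2 + 6 →
      rA*sA + rB*sB + rC*sC = 0 →
      rA*rB*rC - rC*sA*sB - rB*sA*sC - rA*sB*sC = -(6*lam.re) → False := by
    intro rA rB rC sA sB sC ha hb h01 h02 h03 h04 h05
    have := claimB α rA rB rC sA sB sC hα0 hα1 ha hb h01 h02 h03 h04
    linarith [hbound]
  have hno2 : ¬ (m2.re ≤ -α) := by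
    intro hy
    exact contra m1.re m2.re m3.re m1.im m2.im m3.im h1.le hy hr hs hC1 hC2
      (by linear_combination hP)
  have hno3 : ¬ (m3.re ≤ -α) := by
    intro hy
    exact contra m1.re m3.re m2.re m1.im m3.im m2.im h1.le hy (by linarith) (by linarith)
      (by linarith [hC1]) (by linarith [hC2]) (by linear_combination hP)
  refine ⟨m1, h1, hroot1, ?_, ?_⟩
  · intro hder
    have hsq : m1 ^ 2 = 1 := by linear_combination 2 * hder
    have hf : (m1 - 1) * (m1 + 1) = 0 := by linear_combination hsq
    rcases mul_eq_zero.1 hf with h | h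
    · have hm : m1 = 1 := by linear_combination h
      rw [hm] at h1; simp at h1; linarith
    · have hm : m1 = -1 := by linear_combination h
      rw [hm] at hroot1
      have hlam' : lam = -(1/3 : ℂ) := by linear_combination hroot1
      have hre : lam.re = -(1/3) := by rw [hlam']; simp
      rw [hre] at hlam
      nlinarith [sq_nonneg (α - 1)]
  · intro mu' hre' hroot'
    have hz : (mu' - m1) * (mu' - m2) * (mu' - m3) = 0 := by
      have h := key mu'
      rw [hroot'] at h
      linear_combination -6 * h
    rcases mul_eq_zero.1 hz with h | h
    · rcases mul_eq_zero.1 h with h | h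
      · exact sub_eq_zero.1 h
      · exact absurd (le_of_lt (by rw [← sub_eq_zero.1 h]; exact hre')) hno2
    · exact absurd (le_of_lt (by rw [← sub_eq_zero.1 h]; exact hre')) hno3

/-- If `α ∈ (0,1)` and `Re λ > −β` with `β = (α/2)(1 − α²/3)`, then the cubic
`λ − μ/2 + μ³/6 = 0` has exactly one root `μ` with `Re μ < −α`, and that root is
simple (the derivative `−1/2 + μ²/2` does not vanish there). -/
theorem unique_decaying_root (α : ℝ) (hα0 : 0 < α) (hα1 : α < 1) (lam : ℂ)
    (hlam : -((α / 2) * (1 - α ^ 2 / 3)) < lam.re) :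
    ∃ mu : ℂ, mu.re < -α ∧ lam - mu / 2 + mu ^ 3 / 6 = 0 ∧
      (-(1 / 2) + mu ^ 2 / 2 ≠ 0) ∧
      ∀ mu' : ℂ, mu'.re < -α → lam - mu' / 2 + mu' ^ 3 / 6 = 0 → mu' = mu := by
  obtain ⟨m1, hm1⟩ := Complex.exists_root
    (f := Polynomial.X^3 + (Polynomial.C (-3) * Polynomial.X + Polynomial.C (6*lam))) (by
    have h1 : (Polynomial.C (-3:ℂ) * Polynomial.X + Polynomial.C (6*lam)).degree <
        ((Polynomial.X : Polynomial ℂ)^3).degree := by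
      apply lt_of_le_of_lt (Polynomial.degree_add_le _ _)
      rw [Polynomial.degree_X_pow]
      exact max_lt (lt_of_le_of_lt (Polynomial.degree_C_mul_X_le _) (by norm_num))
        (lt_of_le_of_lt (Polynomial.degree_C_le) (by norm_num))
    rw [Polynomial.degree_add_eq_left_of_degree_lt h1, Polynomial.degree_X_pow]
    norm_num)
  have hroot1 : lam - m1/2 + m1^3/6 = 0 := by
    have := hm1
    simp [Polynomial.IsRoot, Polynomial.eval_add, Polynomial.eval_pow, Polynomial.eval_mul] at this
    linear_combination this / 6
  obtain ⟨w, hw⟩ : ∃ w : ℂ, w ^ 2 = 3 - 3*m1^2/4 :=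
    IsAlgClosed.exists_pow_nat_eq _ (by norm_num)
  set m2 : ℂ := -m1/2 + w with hm2
  set m3 : ℂ := -m1/2 - w with hm3
  have key : ∀ μ : ℂ, lam - μ/2 + μ^3/6 = (μ - m1)*(μ - m2)*(μ - m3)/6 := by
    intro μ
    rw [hm2, hm3]
    linear_combination hroot1 + ((μ - m1)/6) * hw
  have hsum : m1 + m2 + m3 = 0 := by rw [hm2, hm3]; ring
  have he2 : m1*m2 + m1*m3 + m2*m3 = -3 := by rw [hm2, hm3]; linear_combination -hw
  have he3 : m1*m2*m3 = -6*lam := by rw [hm2, hm3]; linear_combination -m1*hw + 6*hroot1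
  by_cases hc1 : m1.re < -α
  · exact main_aux α hα0 hα1 lam m1 m2 m3 hlam key hsum he2 he3 hc1
  by_cases hc2 : m2.re < -α
  · exact main_aux α hα0 hα1 lam m2 m1 m3 hlam
      (fun μ => by rw [key μ]; ring) (by linear_combination hsum)
      (by linear_combination he2) (by linear_combination he3) hc2
  have hc3 : m3.re < -α := by
    by_contra hc3
    push_neg at hc1 hc2 hc3
    have hr : m1.re + m2.re + m3.re = 0 := by
      have := congrArg Complex.re hsum; simpa using this
    have hs : m1.im + m2.im + m3.im = 0 := by
      have := congrArg Complex.im hsum; simpa using this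
    have hE2 := congrArg Complex.re he2
    simp [Complex.add_re, Complex.mul_re] at hE2
    have hC1 : m1.re^2 + m2.re^2 + m3.re^2 = m1.im^2 + m2.im^2 + m3.im^2 + 6 := by
      linear_combination (m1.re + m2.re + m3.re) * hr - (m1.im + m2.im + m3.im) * hs - 2 * hE2
    exact claimA α m1.re m2.re m3.re m1.im m2.im m3.im hα0 hα1 hc1 hc2 hc3 hr hC1
  exact main_aux α hα0 hα1 lam m3 m1 m2 hlam
    (fun μ => by rw [key μ]; ring) (by linear_combination hsum)
    (by linear_combination he2) (by linear_combination he3) hc3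
end

section
/- For the KdV linearization at the soliton: if f is a smooth function with e^{αx} f ∈ L²(ℝ) (0 < α < √3) satisfying (−½∂ₓ + (1/6)∂ₓ³) f + ∂ₓ((3/2) S f) = 0 with S(x) = sech²(√3 x/2), then f is a scalar multiple of S'. -/
open MeasureTheory

noncomputable def S0 (x : ℝ) : ℝ := (1 / Real.cosh (Real.sqrt 3 * x / 2)) ^ 2
noncomputable def S1 (x : ℝ) : ℝ :=
  -(Real.sqrt 3 * (Real.sinh (Real.sqrt 3 * x / 2) / Real.cosh (Real.sqrt 3 * x / 2) ^ 3))
noncomputable def S2 (x : ℝ) : ℝ := 3 * S0 x - 9 / 2 * S0 x ^ 2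
noncomputable def S3 (x : ℝ) : ℝ := (3 - 9 * S0 x) * S1 x

lemma hasDerivAt_arg (x : ℝ) :
    HasDerivAt (fun y : ℝ => Real.sqrt 3 * y / 2) (Real.sqrt 3 / 2) x := by
  simpa using ((hasDerivAt_id x).const_mul (Real.sqrt 3)).div_const 2

lemma hasDerivAt_ch (x : ℝ) :
    HasDerivAt (fun y : ℝ => Real.cosh (Real.sqrt 3 * y / 2))
      (Real.sinh (Real.sqrt 3 * x / 2) * (Real.sqrt 3 / 2)) x :=
  (Real.hasDerivAt_cosh _).comp x (hasDerivAt_arg x)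

lemma hasDerivAt_sh (x : ℝ) :
    HasDerivAt (fun y : ℝ => Real.sinh (Real.sqrt 3 * y / 2))
      (Real.cosh (Real.sqrt 3 * x / 2) * (Real.sqrt 3 / 2)) x :=
  (Real.hasDerivAt_sinh _).comp x (hasDerivAt_arg x)

lemma sqrt3_sq : Real.sqrt 3 ^ 2 = 3 := Real.sq_sqrt (by norm_num)

lemma hasDerivAt_S0 (x : ℝ) :
    HasDerivAt (fun y : ℝ => (1 / Real.cosh (Real.sqrt 3 * y / 2)) ^ 2) (S1 x) x := by
  have h := ((hasDerivAt_ch x).inv (Real.cosh_pos _).ne').pow 2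
  have hc : Real.cosh (Real.sqrt 3 * x / 2) ≠ 0 := (Real.cosh_pos _).ne'
  convert h using 1
  · rfl
  · rfl
  · funext y; simp [S0, one_div]
  · simp only [S1, Pi.inv_apply]
    field_simp
    rw [show (2:ℕ) - 1 = 1 from rfl, pow_one]
    linear_combination (2 * Real.sinh (Real.sqrt 3 * x / 2)) * mul_inv_cancel₀ hc

lemma hasDerivAt_S1 (x : ℝ) : HasDerivAt S1 (S2 x) x := by
  have hc : Real.cosh (Real.sqrt 3 * x / 2) ≠ 0 := (Real.cosh_pos _).ne'
  have h := (((hasDerivAt_sh x).div ((hasDerivAt_ch x).pow 3) (pow_ne_zero 3 hc)).const_mul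
    (Real.sqrt 3)).neg
  convert h using 1
  rfl
  rfl
  rfl
  have hs : Real.sinh (Real.sqrt 3 * x / 2) ^ 2 = Real.cosh (Real.sqrt 3 * x / 2) ^ 2 - 1 :=
    Real.sinh_sq _
  simp only [S2, S0, Pi.pow_apply]
  set s := Real.sinh (Real.sqrt 3 * x / 2) with hsdef
  set c := Real.cosh (Real.sqrt 3 * x / 2) with hcdef
  push_cast
  field_simp
  ring_nf
  rw [hs]
  ring_nf
  rw [sqrt3_sq]
  ring

lemma hasDerivAt_S2 (x : ℝ) : HasDerivAt S2 (S3 x) x := by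
  have h := ((hasDerivAt_S0 x).const_mul 3).sub (((hasDerivAt_S0 x).pow 2).const_mul (9/2))
  convert h using 1
  rfl
  rfl
  rfl
  simp only [S3, S0, one_div]; push_cast; ring

lemma S0_nonneg (x : ℝ) : 0 ≤ S0 x := sq_nonneg _

lemma S0_le_one (x : ℝ) : S0 x ≤ 1 := by
  have h1 : (1:ℝ) ≤ Real.cosh (Real.sqrt 3 * x / 2) := Real.one_le_cosh _
  have h2 : 1 / Real.cosh (Real.sqrt 3 * x / 2) ≤ 1 := by
    rw [div_le_one (by linarith)]; linarith
  have h3 : 0 ≤ 1 / Real.cosh (Real.sqrt 3 * x / 2) := by positivity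
  calc S0 x = (1 / Real.cosh (Real.sqrt 3 * x / 2)) ^ 2 := rfl
    _ ≤ 1 ^ 2 := by apply pow_le_pow_left₀ h3 h2
    _ = 1 := one_pow 2

lemma abs_sinh_le_cosh (t : ℝ) : |Real.sinh t| ≤ Real.cosh t := by
  rw [abs_le]
  constructor
  · nlinarith [Real.cosh_add_sinh t, Real.exp_pos t]
  · nlinarith [Real.cosh_sub_sinh t, Real.exp_pos (-t)]

lemma abs_S1_le (x : ℝ) : |S1 x| ≤ 2 := by
  have hc1 : (1:ℝ) ≤ Real.cosh (Real.sqrt 3 * x / 2) := Real.one_le_cosh _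
  have hc : 0 < Real.cosh (Real.sqrt 3 * x / 2) := Real.cosh_pos _
  have hs := abs_sinh_le_cosh (Real.sqrt 3 * x / 2)
  have hr : Real.sqrt 3 ≤ 2 := by
    rw [show (2:ℝ) = Real.sqrt 4 by rw [show (4:ℝ) = 2^2 by norm_num, Real.sqrt_sq]; norm_num]
    exact Real.sqrt_le_sqrt (by norm_num)
  have hr0 : 0 ≤ Real.sqrt 3 := Real.sqrt_nonneg 3
  have key : |S1 x| = Real.sqrt 3 * (|Real.sinh (Real.sqrt 3 * x / 2)| / Real.cosh (Real.sqrt 3 * x / 2) ^ 3) := by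
    rw [S1, abs_neg, abs_mul, abs_div, abs_of_nonneg hr0, abs_of_pos (pow_pos hc 3)]
  rw [key]
  have h1 : |Real.sinh (Real.sqrt 3 * x / 2)| / Real.cosh (Real.sqrt 3 * x / 2) ^ 3 ≤ 1 := by
    rw [div_le_one (pow_pos hc 3)]
    calc |Real.sinh (Real.sqrt 3 * x / 2)| ≤ Real.cosh (Real.sqrt 3 * x / 2) := hs
      _ ≤ Real.cosh (Real.sqrt 3 * x / 2) ^ 3 := by
          nlinarith [mul_nonneg (mul_nonneg hc.le (sub_nonneg.mpr hc1))
            (by linarith : (0:ℝ) ≤ Real.cosh (Real.sqrt 3 * x / 2) + 1)]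
  have h0 : 0 ≤ |Real.sinh (Real.sqrt 3 * x / 2)| / Real.cosh (Real.sqrt 3 * x / 2) ^ 3 := by positivity
  nlinarith

lemma abs_S2_le (x : ℝ) : |S2 x| ≤ 8 := by
  have h0 := S0_nonneg x
  have h1 := S0_le_one x
  rw [S2, abs_le]
  constructor <;> nlinarith

lemma S1_zero : S1 0 = 0 := by simp [S1]

lemma S2_zero : S2 0 = -(3/2) := by norm_num [S2, S0]

set_option maxHeartbeats 1000000

open MeasureTheory Filter Set

/-- KdV linearization at the soliton, `λ = 0` case: a smooth solution `f` of
`(−½∂ₓ + (1/6)∂ₓ³) f + ∂ₓ((3/2) S f) = 0` with `e^{αx} f ∈ L²` for some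
`0 < α < √3` (and `f, f', f''` exponentially decaying as `x → +∞`)
is a scalar multiple of `S'`, where `S(x) = sech²(√3 x/2)`. -/
theorem kernel_is_span_of_Sprime (α : ℝ) (hα0 : 0 < α) (hα1 : α < Real.sqrt 3)
    (f : ℝ → ℝ) (hf : ContDiff ℝ (⊤ : ℕ∞) f)
    (hL2 : MemLp (fun x => Real.exp (α * x) * f x) 2 volume)
    (hdecay : ∃ C c : ℝ, 0 < c ∧ ∀ x : ℝ, 0 ≤ x →
      |f x| + |deriv f x| + |deriv (deriv f) x| ≤ C * Real.exp (-c * x))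
    (heq : ∀ x : ℝ,
      -(1 / 2) * deriv f x + (1 / 6) * deriv (deriv (deriv f)) x +
        deriv (fun y : ℝ => (3 / 2) * (1 / Real.cosh (Real.sqrt 3 * y / 2)) ^ 2 * f y) x = 0) :
    ∃ c : ℝ, ∀ x : ℝ,
      f x = c * deriv (fun y : ℝ => (1 / Real.cosh (Real.sqrt 3 * y / 2)) ^ 2) x := by
  obtain ⟨C, cd, hcd, hbound⟩ := hdecay
  -- differentiability bookkeeping
  have hf0 : ContDiff ℝ (↑(⊤:ℕ∞)) f := hf.of_le (by simp)
  have hf1 : ContDiff ℝ (↑(⊤:ℕ∞)) (deriv f) := (contDiff_infty_iff_deriv.mp hf0).2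
  have hf2 : ContDiff ℝ (↑(⊤:ℕ∞)) (deriv (deriv f)) := (contDiff_infty_iff_deriv.mp hf1).2
  have hfd : ∀ x, HasDerivAt f (deriv f x) x := fun x =>
    ((contDiff_infty_iff_deriv.mp hf0).1 x).hasDerivAt
  have hfd1 : ∀ x, HasDerivAt (deriv f) (deriv (deriv f) x) x := fun x =>
    ((contDiff_infty_iff_deriv.mp hf1).1 x).hasDerivAt
  have hfd2 : ∀ x, HasDerivAt (deriv (deriv f)) (deriv (deriv (deriv f)) x) x := fun x =>
    ((contDiff_infty_iff_deriv.mp hf2).1 x).hasDerivAt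
  -- decay tendsto
  have hexp : Tendsto (fun x : ℝ => C * Real.exp (-cd * x)) atTop (nhds 0) := by
    have h1 : Tendsto (fun x : ℝ => Real.exp (-(cd * x))) atTop (nhds 0) :=
      Real.tendsto_exp_neg_atTop_nhds_zero.comp (tendsto_id.const_mul_atTop hcd)
    have h2 : Tendsto (fun x : ℝ => C * Real.exp (-(cd * x))) atTop (nhds (C * 0)) :=
      h1.const_mul C
    simpa [neg_mul] using h2
  -- derivative of the product term in `heq`
  have hP : ∀ x, HasDerivAt
      (fun y : ℝ => (3 / 2) * (1 / Real.cosh (Real.sqrt 3 * y / 2)) ^ 2 * f y)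
      (3 / 2 * S1 x * f x + 3 / 2 * S0 x * deriv f x) x := fun x =>
    ((hasDerivAt_S0 x).const_mul (3/2 : ℝ)).mul (hfd x)
  -- first integral g
  set g : ℝ → ℝ := fun x => -(1 / 2) * f x + (1 / 6) * deriv (deriv f) x
      + (3 / 2 * S0 x) * f x with hgdef
  have hg : ∀ x, HasDerivAt g 0 x := by
    intro x
    have hq := heq x
    rw [(hP x).deriv] at hq
    have hsum : HasDerivAt g
        (-(1 / 2) * deriv f x + (1 / 6) * deriv (deriv (deriv f)) x +
          (3 / 2 * S1 x * f x + 3 / 2 * S0 x * deriv f x)) x :=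
      (((hfd x).const_mul (-(1/2) : ℝ)).add ((hfd2 x).const_mul ((1/6) : ℝ))).add (hP x)
    rw [hq] at hsum
    exact hsum
  have hgconst : ∀ x, g x = g 0 :=
    fun x => is_const_of_deriv_eq_zero (fun y => (hg y).differentiableAt)
      (fun y => (hg y).deriv) x 0
  have hgz : Tendsto g atTop (nhds 0) := by
    apply squeeze_zero_norm' (a := fun x : ℝ => 3 * (C * Real.exp (-cd * x)))
    · filter_upwards [eventually_ge_atTop (0:ℝ)] with x hx
      have hb := hbound x hx
      have h1 : |f x| ≤ C * Real.exp (-cd * x) := by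
        linarith [abs_nonneg (deriv f x), abs_nonneg (deriv (deriv f) x)]
      have h2 : |deriv (deriv f) x| ≤ C * Real.exp (-cd * x) := by
        linarith [abs_nonneg (f x), abs_nonneg (deriv f x)]
      have hCe : 0 ≤ C * Real.exp (-cd * x) := le_trans (abs_nonneg _) h1
      have hS0 := S0_le_one x
      have hS0' := S0_nonneg x
      have e3 : |(3 / 2 * S0 x) * f x| ≤ 3 / 2 * |f x| := by
        rw [abs_mul]
        have : |3 / 2 * S0 x| ≤ 3 / 2 := by
          rw [abs_of_nonneg (by positivity)]; linarith
        nlinarith [abs_nonneg (f x)]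
      have habs : |g x| ≤ 1 / 2 * |f x| + 1 / 6 * |deriv (deriv f) x| + 3 / 2 * |f x| := by
        simp only [hgdef]
        have t1 := abs_add_le (-(1 / 2) * f x + (1 / 6) * deriv (deriv f) x) ((3 / 2 * S0 x) * f x)
        have t2 := abs_add_le (-(1 / 2) * f x) ((1 / 6) * deriv (deriv f) x)
        have e1 : |(-(1 / 2) : ℝ) * f x| = 1 / 2 * |f x| := by rw [abs_mul]; norm_num
        have e2 : |(1 / 6 : ℝ) * deriv (deriv f) x| = 1 / 6 * |deriv (deriv f) x| := by
          rw [abs_mul]; norm_num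
        rw [e1, e2] at t2
        linarith
      rw [Real.norm_eq_abs]
      linarith
    · simpa using hexp.const_mul 3
  have hg0 : g 0 = 0 := by
    have h1 : Tendsto g atTop (nhds (g 0)) := by
      have : g = fun _ => g 0 := funext hgconst
      nth_rewrite 1 [this]
      exact tendsto_const_nhds
    exact tendsto_nhds_unique h1 hgz
  -- the second-order equation
  have hE2 : ∀ x, deriv (deriv f) x = (3 - 9 * S0 x) * f x := by
    intro x
    have h := hgconst x
    rw [hg0] at h
    simp only [hgdef] at h
    linear_combination 6 * h
  -- Wronskian with S1
  set W : ℝ → ℝ := fun x => f x * S2 x - deriv f x * S1 x with hWdef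
  have hW : ∀ x, HasDerivAt W 0 x := by
    intro x
    have h := ((hfd x).mul (hasDerivAt_S2 x)).sub ((hfd1 x).mul (hasDerivAt_S1 x))
    have hval : deriv f x * S2 x + f x * S3 x -
        (deriv (deriv f) x * S1 x + deriv f x * S2 x) = 0 := by
      rw [hE2 x]; simp only [S3]; ring
    rw [hval] at h
    exact h
  have hWconst : ∀ x, W x = W 0 :=
    fun x => is_const_of_deriv_eq_zero (fun y => (hW y).differentiableAt)
      (fun y => (hW y).deriv) x 0
  have hWz : Tendsto W atTop (nhds 0) := by
    apply squeeze_zero_norm' (a := fun x : ℝ => 10 * (C * Real.exp (-cd * x)))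
    · filter_upwards [eventually_ge_atTop (0:ℝ)] with x hx
      have hb := hbound x hx
      have h1 : |f x| ≤ C * Real.exp (-cd * x) := by
        linarith [abs_nonneg (deriv f x), abs_nonneg (deriv (deriv f) x)]
      have h2 : |deriv f x| ≤ C * Real.exp (-cd * x) := by
        linarith [abs_nonneg (f x), abs_nonneg (deriv (deriv f) x)]
      have hCe : 0 ≤ C * Real.exp (-cd * x) := le_trans (abs_nonneg _) h1
      have hS1 := abs_S1_le x
      have hS2 := abs_S2_le x
      have t1 : |W x| ≤ |f x * S2 x| + |deriv f x * S1 x| := abs_sub _ _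
      rw [abs_mul, abs_mul] at t1
      rw [Real.norm_eq_abs]
      nlinarith [abs_nonneg (f x), abs_nonneg (deriv f x), abs_nonneg (S1 x), abs_nonneg (S2 x)]
    · simpa using hexp.const_mul 10
  have hW0 : W 0 = 0 := by
    have h1 : Tendsto W atTop (nhds (W 0)) := by
      have : W = fun _ => W 0 := funext hWconst
      nth_rewrite 1 [this]
      exact tendsto_const_nhds
    exact tendsto_nhds_unique h1 hWz
  have hf00 : f 0 = 0 := by
    have h := hW0
    simp only [hWdef] at h
    rw [S1_zero, S2_zero] at h
    linarith
  -- the candidate constant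
  set cc : ℝ := -(2 / 3) * deriv f 0 with hccdef
  refine ⟨cc, ?_⟩
  set u : ℝ → ℝ := fun x => f x - cc * S1 x with hudef
  set v : ℝ → ℝ := fun x => deriv f x - cc * S2 x with hvdef
  have hu : ∀ x, HasDerivAt u (v x) x :=
    fun x => (hfd x).sub ((hasDerivAt_S1 x).const_mul cc)
  have hv : ∀ x, HasDerivAt v ((3 - 9 * S0 x) * u x) x := by
    intro x
    have h := (hfd1 x).sub ((hasDerivAt_S2 x).const_mul cc)
    have hval : deriv (deriv f) x - cc * S3 x = (3 - 9 * S0 x) * u x := by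
      rw [hE2 x]; simp only [hudef, S3]; ring
    rw [hval] at h
    exact h
  have hu0 : u 0 = 0 := by simp [hudef, S1_zero, hf00]
  have hv0 : v 0 = 0 := by
    simp only [hvdef, hccdef]
    rw [S2_zero]; ring
  set E : ℝ → ℝ := fun x => u x ^ 2 + v x ^ 2 with hEdef
  have hE : ∀ x, HasDerivAt E
      (2 * u x * v x + 2 * v x * ((3 - 9 * S0 x) * u x)) x := by
    intro x
    have h := ((hu x).pow 2).add ((hv x).pow 2)
    convert h using 1
    rfl
    rfl
    rfl
    push_cast
    ring
  have hEnonneg : ∀ x, 0 ≤ E x := fun x => add_nonneg (sq_nonneg _) (sq_nonneg _)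
  have hE0 : E 0 = 0 := by simp [hEdef, hu0, hv0]
  have hEbound : ∀ x, |deriv E x| ≤ 5 * E x := by
    intro x
    rw [(hE x).deriv]
    have h1 := S0_nonneg x
    have h2 := S0_le_one x
    have h3 : |2 * u x * v x| ≤ u x ^ 2 + v x ^ 2 := by
      rw [abs_le]
      constructor
      · nlinarith [sq_nonneg (u x + v x)]
      · nlinarith [sq_nonneg (u x - v x)]
    have hrw : 2 * u x * v x + 2 * v x * ((3 - 9 * S0 x) * u x)
        = (2 * u x * v x) * (4 - 9 * S0 x) := by ring
    rw [hrw, abs_mul]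
    have h4 : |4 - 9 * S0 x| ≤ 5 := by
      rw [abs_le]; constructor <;> linarith
    calc |2 * u x * v x| * |4 - 9 * S0 x| ≤ (u x ^ 2 + v x ^ 2) * 5 :=
          mul_le_mul h3 h4 (abs_nonneg _) (by positivity)
      _ = 5 * E x := by simp only [hEdef]; ring
  -- E vanishes on [0, ∞)
  have hfwd : ∀ x, 0 ≤ x → E x = 0 := by
    intro x hx
    set G : ℝ → ℝ := fun y => E y * Real.exp (-5 * y) with hGdef
    have hG : ∀ y, HasDerivAt G ((deriv E y - 5 * E y) * Real.exp (-5 * y)) y := by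
      intro y
      have h2 := (hE y).mul (((hasDerivAt_id y).const_mul (-5 : ℝ)).exp)
      convert h2 using 1
      rfl
      rfl
      rfl
      rw [(hE y).deriv]
      simp only [id_eq]
      ring
    have hanti : AntitoneOn G (Ici 0) := by
      apply antitoneOn_of_deriv_nonpos (convex_Ici 0)
      · exact (Differentiable.continuous fun y => (hG y).differentiableAt).continuousOn
      · intro y _; exact (hG y).differentiableAt.differentiableWithinAt
      · intro y _
        rw [(hG y).deriv]
        have hb := abs_le.mp (hEbound y)
        have := Real.exp_pos (-5 * y)
        nlinarith
    have hle : G x ≤ G 0 := hanti (self_mem_Ici) hx hx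
    have hG0 : G 0 = 0 := by simp [hGdef, hE0]
    rw [hG0] at hle
    have h1 : 0 < Real.exp (-5 * x) := Real.exp_pos _
    have h2 := hEnonneg x
    simp only [hGdef] at hle
    nlinarith
  -- E vanishes on (-∞, 0]
  have hbwd : ∀ x, x ≤ 0 → E x = 0 := by
    intro x hx
    set H : ℝ → ℝ := fun y => E y * Real.exp (5 * y) with hHdef
    have hH : ∀ y, HasDerivAt H ((deriv E y + 5 * E y) * Real.exp (5 * y)) y := by
      intro y
      have h2 := (hE y).mul (((hasDerivAt_id y).const_mul (5 : ℝ)).exp)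
      convert h2 using 1
      rfl
      rfl
      rfl
      rw [(hE y).deriv]
      simp only [id_eq]
      ring
    have hmono : MonotoneOn H (Iic 0) := by
      apply monotoneOn_of_deriv_nonneg (convex_Iic 0)
      · exact (Differentiable.continuous fun y => (hH y).differentiableAt).continuousOn
      · intro y _; exact (hH y).differentiableAt.differentiableWithinAt
      · intro y _
        rw [(hH y).deriv]
        have hb := abs_le.mp (hEbound y)
        have := Real.exp_pos (5 * y)
        nlinarith
    have hle : H x ≤ H 0 := hmono hx (self_mem_Iic) hx
    have hH0 : H 0 = 0 := by simp [hHdef, hE0]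
    rw [hH0] at hle
    have h1 : 0 < Real.exp (5 * x) := Real.exp_pos _
    have h2 := hEnonneg x
    simp only [hHdef] at hle
    nlinarith
  -- conclude
  intro x
  have hEx : E x = 0 := by
    rcases le_total 0 x with h | h
    · exact hfwd x h
    · exact hbwd x h
  have hux : u x = 0 := by
    have hEx' := hEx
    simp only [hEdef] at hEx'
    nlinarith [sq_nonneg (u x), sq_nonneg (v x)]
  have hfx : f x = cc * S1 x := by
    simp only [hudef] at hux
    linarith
  rw [hfx, (hasDerivAt_S0 x).deriv]
end

section
/- There is no smooth exponentially decaying solution f₂ of (−½∂ₓ + (1/6)∂ₓ³ + (3/2)∂ₓ∘S) f₂ + f₁ = 0, where S = sech²(√3x/2) and f₁ = −½∂_b φ_b|_{b=1}: the Jordan chain at λ=0 has length exactly 2. -/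
open MeasureTheory Filter

noncomputable def Efun (x : ℝ) : ℝ :=
  -(1/2) * ((1 / Real.cosh (Real.sqrt 3 * x / 2)) ^ 2
    - Real.sqrt 3 * x / 2 * Real.sinh (Real.sqrt 3 * x / 2) / Real.cosh (Real.sqrt 3 * x / 2) ^ 3)

noncomputable def Hfun (x : ℝ) : ℝ :=
  -(1/(2 * Real.sqrt 3)) * (Real.sinh (Real.sqrt 3 * x / 2) / Real.cosh (Real.sqrt 3 * x / 2))
    - x / (4 * Real.cosh (Real.sqrt 3 * x / 2) ^ 2)

lemma hasDerivAt_Hfun (x : ℝ) : HasDerivAt Hfun (Efun x) x := by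
  have hne : Real.cosh (Real.sqrt 3 * x / 2) ≠ 0 := (Real.cosh_pos _).ne'
  have hu : HasDerivAt (fun y : ℝ => Real.sqrt 3 * y / 2) (Real.sqrt 3 / 2) x := by
    simpa using ((hasDerivAt_id x).const_mul (Real.sqrt 3)).div_const 2
  have hs := (Real.hasDerivAt_sinh (Real.sqrt 3 * x / 2)).comp x hu
  have hc := (Real.hasDerivAt_cosh (Real.sqrt 3 * x / 2)).comp x hu
  have htanh := hs.div hc hne
  have hden := (hc.pow 2).const_mul (4 : ℝ)
  have hfrac := (hasDerivAt_id x).div hden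
      (by positivity : (4 : ℝ) * Real.cosh (Real.sqrt 3 * x / 2) ^ 2 ≠ 0)
  have hH := (htanh.const_mul (-(1/(2 * Real.sqrt 3)))).sub hfrac
  refine hH.congr_deriv (Eq.symm ?_)
  have hsq : Real.sqrt 3 ^ 2 = 3 := Real.sq_sqrt (by norm_num)
  have h3 : Real.sqrt 3 ≠ 0 := by positivity
  have hcs := Real.cosh_sq (Real.sqrt 3 * x / 2)
  simp only [Efun, id_eq, Function.comp_apply, Pi.pow_apply, Pi.inv_apply]
  field_simp
  ring_nf
  ring_nf at hcs
  linear_combination (4 * Real.cosh (Real.sqrt 3 * x * (1/2)) ^ 2) * hcs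

lemma hasDerivAt_b (x : ℝ) :
    HasDerivAt (fun b : ℝ => b * (1 / Real.cosh (Real.sqrt (3 * b) * x / 2)) ^ 2)
      ((1 / Real.cosh (Real.sqrt 3 * x / 2)) ^ 2
        - Real.sqrt 3 * x / 2 * Real.sinh (Real.sqrt 3 * x / 2)
            / Real.cosh (Real.sqrt 3 * x / 2) ^ 3) 1 := by
  have h3 : Real.sqrt 3 ≠ 0 := by positivity
  have hs3 : Real.sqrt 3 * Real.sqrt 3 = 3 := Real.mul_self_sqrt (by norm_num)
  have h3b : HasDerivAt (fun b : ℝ => (3 : ℝ) * b) 3 1 := by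
    simpa using (hasDerivAt_id (1 : ℝ)).const_mul (3 : ℝ)
  have hsq : HasDerivAt (fun b : ℝ => Real.sqrt (3 * b)) (1 / (2 * Real.sqrt 3) * 3) 1 := by
    have h := (Real.hasDerivAt_sqrt (show (3 : ℝ) * 1 ≠ 0 by norm_num)).comp 1 h3b
    rw [show (3 : ℝ) * 1 = 3 by norm_num] at h
    exact h
  have hw : HasDerivAt (fun b : ℝ => Real.sqrt (3 * b) * x / 2)
      (1 / (2 * Real.sqrt 3) * 3 * x / 2) 1 := (hsq.mul_const x).div_const 2
  have hch : HasDerivAt (fun b : ℝ => Real.cosh (Real.sqrt (3 * b) * x / 2))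
      (Real.sinh (Real.sqrt 3 * x / 2) * (1 / (2 * Real.sqrt 3) * 3 * x / 2)) 1 := by
    have h := (Real.hasDerivAt_cosh (Real.sqrt (3 * 1) * x / 2)).comp 1 hw
    simpa [Function.comp_def] using h
  have hne : Real.cosh (Real.sqrt (3 * 1) * x / 2) ≠ 0 := (Real.cosh_pos _).ne'
  have hinv := hch.inv (by simpa using hne)
  have hpow := hinv.pow 2
  have hmul := (hasDerivAt_id (1 : ℝ)).mul hpow
  have hfun : (fun b : ℝ => b * (1 / Real.cosh (Real.sqrt (3 * b) * x / 2)) ^ 2)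
      = fun b : ℝ => b * ((Real.cosh (Real.sqrt (3 * b) * x / 2))⁻¹) ^ 2 := by
    funext b; rw [one_div]
  rw [hfun]
  refine hmul.congr_deriv (Eq.symm ?_)
  have hne' : Real.cosh (Real.sqrt 3 * x / 2) ≠ 0 := (Real.cosh_pos _).ne'
  simp only [mul_one, one_div, id_eq, Pi.pow_apply, Pi.inv_apply]
  push_cast
  field_simp
  ring_nf
  rw [Real.sq_sqrt (by norm_num : (0:ℝ) ≤ 3)]
  ring
lemma sqrt3_ge : (1.7:ℝ) ≤ Real.sqrt 3 := by
  rw [show (1.7:ℝ) = Real.sqrt (1.7^2) by rw [Real.sqrt_sq]; norm_num]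
  exact Real.sqrt_le_sqrt (by norm_num)

lemma half_exp_le_cosh (y : ℝ) : Real.exp y ≤ 2 * Real.cosh y := by
  rw [Real.cosh_eq]; nlinarith [Real.exp_pos (-y)]

lemma half_exp_neg_le_cosh (y : ℝ) : Real.exp (-y) ≤ 2 * Real.cosh y := by
  rw [Real.cosh_eq]; nlinarith [Real.exp_pos y]

-- tanh → 1 at +∞
lemma tendsto_tanh_atTop :
    Tendsto (fun x : ℝ => Real.sinh (Real.sqrt 3 * x / 2) / Real.cosh (Real.sqrt 3 * x / 2))
      atTop (nhds 1) := by
  have hs3 := sqrt3_ge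
  have key : Tendsto (fun x : ℝ =>
      Real.exp (-(Real.sqrt 3 * x / 2)) / Real.cosh (Real.sqrt 3 * x / 2)) atTop (nhds 0) := by
    apply squeeze_zero_norm' (a := fun x : ℝ => 2 * Real.exp (-x))
    · filter_upwards [eventually_ge_atTop (0:ℝ)] with x hx
      have hc := Real.cosh_pos (Real.sqrt 3 * x / 2)
      have h1 := half_exp_le_cosh (Real.sqrt 3 * x / 2)
      have he := Real.exp_pos (Real.sqrt 3 * x / 2)
      rw [Real.norm_eq_abs, abs_of_nonneg (by positivity), Real.exp_neg]
      have h2 : (Real.cosh (Real.sqrt 3 * x / 2))⁻¹ ≤ 2 * (Real.exp (Real.sqrt 3 * x / 2))⁻¹ := by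
        rw [← one_div, ← one_div, mul_one_div, div_le_div_iff₀ hc (by positivity)]
        nlinarith
      calc (Real.exp (Real.sqrt 3 * x / 2))⁻¹ / Real.cosh (Real.sqrt 3 * x / 2)
          = (Real.exp (Real.sqrt 3 * x / 2))⁻¹ * (Real.cosh (Real.sqrt 3 * x / 2))⁻¹ := by
            rw [div_eq_mul_inv]
        _ ≤ (Real.exp (Real.sqrt 3 * x / 2))⁻¹ * (2 * (Real.exp (Real.sqrt 3 * x / 2))⁻¹) := by
            apply mul_le_mul_of_nonneg_left h2 (by positivity)
        _ = 2 * Real.exp (-(Real.sqrt 3 * x)) := by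
            rw [← Real.exp_neg, show -(Real.sqrt 3 * x) = -(Real.sqrt 3 * x / 2) + -(Real.sqrt 3 * x / 2) by ring,
              Real.exp_add]
            ring
        _ ≤ 2 * Real.exp (-x) := by
            have : -(Real.sqrt 3 * x) ≤ -x := by nlinarith
            have := Real.exp_le_exp.mpr this
            linarith
    · have : Tendsto (fun x : ℝ => Real.exp (-x)) atTop (nhds 0) :=
        Real.tendsto_exp_neg_atTop_nhds_zero
      simpa using this.const_mul (2:ℝ)
  have hid : ∀ x : ℝ, Real.sinh (Real.sqrt 3 * x / 2) / Real.cosh (Real.sqrt 3 * x / 2)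
      = 1 - Real.exp (-(Real.sqrt 3 * x / 2)) / Real.cosh (Real.sqrt 3 * x / 2) := by
    intro x
    have hc := (Real.cosh_pos (Real.sqrt 3 * x / 2)).ne'
    have h := Real.cosh_sub_sinh (Real.sqrt 3 * x / 2)
    field_simp
    ring_nf
    ring_nf at h
    linarith
  have := (tendsto_const_nhds (x := (1:ℝ)) (f := atTop)).sub key
  rw [sub_zero] at this
  exact this.congr fun x => (hid x).symm

lemma tendsto_tanh_atBot :
    Tendsto (fun x : ℝ => Real.sinh (Real.sqrt 3 * x / 2) / Real.cosh (Real.sqrt 3 * x / 2))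
      atBot (nhds (-1)) := by
  have hs3 := sqrt3_ge
  have key : Tendsto (fun x : ℝ =>
      Real.exp (Real.sqrt 3 * x / 2) / Real.cosh (Real.sqrt 3 * x / 2)) atBot (nhds 0) := by
    apply squeeze_zero_norm' (a := fun x : ℝ => 2 * Real.exp x)
    · filter_upwards [eventually_le_atBot (0:ℝ)] with x hx
      have hc := Real.cosh_pos (Real.sqrt 3 * x / 2)
      have h1 := half_exp_neg_le_cosh (Real.sqrt 3 * x / 2)
      have he := Real.exp_pos (-(Real.sqrt 3 * x / 2))
      rw [Real.norm_eq_abs, abs_of_nonneg (by positivity)]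
      have h2 : (Real.cosh (Real.sqrt 3 * x / 2))⁻¹ ≤ 2 * (Real.exp (-(Real.sqrt 3 * x / 2)))⁻¹ := by
        rw [← one_div, ← one_div, mul_one_div, div_le_div_iff₀ hc (by positivity)]
        nlinarith
      calc Real.exp (Real.sqrt 3 * x / 2) / Real.cosh (Real.sqrt 3 * x / 2)
          = Real.exp (Real.sqrt 3 * x / 2) * (Real.cosh (Real.sqrt 3 * x / 2))⁻¹ := by
            rw [div_eq_mul_inv]
        _ ≤ Real.exp (Real.sqrt 3 * x / 2) * (2 * (Real.exp (-(Real.sqrt 3 * x / 2)))⁻¹) := by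
            apply mul_le_mul_of_nonneg_left h2 (by positivity)
        _ = 2 * Real.exp (Real.sqrt 3 * x) := by
            rw [← Real.exp_neg, neg_neg, show Real.sqrt 3 * x = Real.sqrt 3 * x / 2 + Real.sqrt 3 * x / 2 by ring,
              Real.exp_add]
            ring
        _ ≤ 2 * Real.exp x := by
            have : Real.sqrt 3 * x ≤ x := by nlinarith
            have := Real.exp_le_exp.mpr this
            linarith
    · have : Tendsto (fun x : ℝ => Real.exp x) atBot (nhds 0) := Real.tendsto_exp_atBot
      simpa using this.const_mul (2:ℝ)
  have hid : ∀ x : ℝ, Real.sinh (Real.sqrt 3 * x / 2) / Real.cosh (Real.sqrt 3 * x / 2)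
      = -1 + Real.exp (Real.sqrt 3 * x / 2) / Real.cosh (Real.sqrt 3 * x / 2) := by
    intro x
    have hc := (Real.cosh_pos (Real.sqrt 3 * x / 2)).ne'
    have h := Real.cosh_add_sinh (Real.sqrt 3 * x / 2)
    field_simp
    ring_nf
    ring_nf at h
    linarith
  have := (tendsto_const_nhds (x := (-1:ℝ)) (f := atBot)).add key
  rw [add_zero] at this
  exact this.congr fun x => (hid x).symm

lemma sqrt3_le_two : Real.sqrt 3 ≤ 2 := by
  nlinarith [Real.sq_sqrt (by norm_num : (0:ℝ) ≤ 3), Real.sqrt_nonneg 3]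

lemma tendsto_xfrac_atTop :
    Tendsto (fun x : ℝ => x / (4 * Real.cosh (Real.sqrt 3 * x / 2) ^ 2)) atTop (nhds 0) := by
  have hs3 := sqrt3_ge
  apply squeeze_zero_norm' (a := fun x : ℝ => x * Real.exp (-x))
  · filter_upwards [eventually_ge_atTop (0:ℝ)] with x hx
    have hc := Real.cosh_pos (Real.sqrt 3 * x / 2)
    have h1 := half_exp_le_cosh (Real.sqrt 3 * x / 2)
    have hexp : Real.exp x ≤ 4 * Real.cosh (Real.sqrt 3 * x / 2) ^ 2 := by
      have h2 : Real.exp x ≤ Real.exp (Real.sqrt 3 * x) := Real.exp_le_exp.mpr (by nlinarith)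
      have h3 : Real.exp (Real.sqrt 3 * x)
          = Real.exp (Real.sqrt 3 * x / 2) * Real.exp (Real.sqrt 3 * x / 2) := by
        rw [← Real.exp_add]; ring_nf
      nlinarith [Real.exp_pos (Real.sqrt 3 * x / 2)]
    rw [Real.norm_eq_abs, abs_of_nonneg (by positivity)]
    calc x / (4 * Real.cosh (Real.sqrt 3 * x / 2) ^ 2) ≤ x / Real.exp x :=
          div_le_div_of_nonneg_left hx (Real.exp_pos x) hexp
      _ = x * Real.exp (-x) := by rw [Real.exp_neg, div_eq_mul_inv]
  · simpa using Real.tendsto_pow_mul_exp_neg_atTop_nhds_zero 1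

lemma tendsto_xfrac_atBot :
    Tendsto (fun x : ℝ => x / (4 * Real.cosh (Real.sqrt 3 * x / 2) ^ 2)) atBot (nhds 0) := by
  have hs3 := sqrt3_ge
  apply squeeze_zero_norm' (a := fun x : ℝ => -x * Real.exp x)
  · filter_upwards [eventually_le_atBot (0:ℝ)] with x hx
    have hc := Real.cosh_pos (Real.sqrt 3 * x / 2)
    have h1 := half_exp_neg_le_cosh (Real.sqrt 3 * x / 2)
    have hexp : Real.exp (-x) ≤ 4 * Real.cosh (Real.sqrt 3 * x / 2) ^ 2 := by
      have h2 : Real.exp (-x) ≤ Real.exp (-(Real.sqrt 3 * x)) := Real.exp_le_exp.mpr (by nlinarith)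
      have h3 : Real.exp (-(Real.sqrt 3 * x))
          = Real.exp (-(Real.sqrt 3 * x / 2)) * Real.exp (-(Real.sqrt 3 * x / 2)) := by
        rw [← Real.exp_add]; ring_nf
      nlinarith [Real.exp_pos (-(Real.sqrt 3 * x / 2))]
    rw [Real.norm_eq_abs, abs_div, abs_of_nonpos hx, abs_of_pos (by positivity)]
    calc -x / (4 * Real.cosh (Real.sqrt 3 * x / 2) ^ 2) ≤ -x / Real.exp (-x) :=
          div_le_div_of_nonneg_left (by linarith) (Real.exp_pos (-x)) hexp
      _ = -x * Real.exp x := by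
          rw [div_eq_mul_inv, ← Real.exp_neg, neg_neg]
  · have := (Real.tendsto_pow_mul_exp_neg_atTop_nhds_zero 1).comp tendsto_neg_atBot_atTop
    have heq : ((fun x : ℝ => x * Real.exp (-x)) ∘ Neg.neg) = fun x : ℝ => -x * Real.exp x := by
      funext y; simp [Function.comp]
    simpa [heq] using this

lemma tendsto_Hfun_atTop : Tendsto Hfun atTop (nhds (-(1/(2 * Real.sqrt 3)))) := by
  have h := (tendsto_tanh_atTop.const_mul (-(1/(2 * Real.sqrt 3)))).sub tendsto_xfrac_atTop
  rw [show -(1/(2 * Real.sqrt 3)) * 1 - 0 = -(1/(2 * Real.sqrt 3)) by ring] at h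
  exact h.congr fun x => rfl

lemma tendsto_Hfun_atBot : Tendsto Hfun atBot (nhds (1/(2 * Real.sqrt 3))) := by
  have h := (tendsto_tanh_atBot.const_mul (-(1/(2 * Real.sqrt 3)))).sub tendsto_xfrac_atBot
  have : -(1/(2 * Real.sqrt 3)) * (-1) - 0 = 1/(2 * Real.sqrt 3) := by ring
  rw [this] at h
  exact h.congr fun x => rfl

lemma exp_abs_le_two_cosh' (y : ℝ) : Real.exp |y| ≤ 2 * Real.cosh y := by
  rcases abs_cases y with ⟨h, _⟩ | ⟨h, _⟩ <;> rw [h, Real.cosh_eq] <;>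
    nlinarith [Real.exp_pos y, Real.exp_pos (-y)]

lemma mul_exp_neg_le' {s t : ℝ} (hs : 0 < s) (ht : 0 ≤ t) :
    t * Real.exp (-(s * t)) ≤ 1 / s := by
  have h1 : s * t ≤ Real.exp (s * t) := by
    nlinarith [Real.add_one_le_exp (s * t)]
  have he := Real.exp_pos (s * t)
  rw [Real.exp_neg, ← div_eq_mul_inv, div_le_div_iff₀ he hs]
  nlinarith

lemma integrable_exp_neg_abs' : Integrable (fun x : ℝ => Real.exp (-|x|)) := by
  have h1 : IntegrableOn (fun x : ℝ => Real.exp (-|x|)) (Set.Iic 0) := by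
    apply IntegrableOn.congr_fun (integrableOn_exp_Iic 0) ?_ measurableSet_Iic
    intro x hx
    simp only [Set.mem_Iic] at hx
    simp [abs_of_nonpos hx]
  have h2 : IntegrableOn (fun x : ℝ => Real.exp (-|x|)) (Set.Ioi 0) := by
    apply IntegrableOn.congr_fun (exp_neg_integrableOn_Ioi 0 one_pos) ?_ measurableSet_Ioi
    intro x hx
    simp only [Set.mem_Ioi] at hx
    simp [abs_of_pos hx]
  have h3 := h1.union h2
  rw [Set.Iic_union_Ioi] at h3
  exact integrableOn_univ.mp h3

lemma continuous_Efun : Continuous Efun := by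
  unfold Efun
  have hc : Continuous fun x : ℝ => Real.cosh (Real.sqrt 3 * x / 2) :=
    Real.continuous_cosh.comp ((continuous_const.mul continuous_id).div_const 2)
  have hs : Continuous fun x : ℝ => Real.sinh (Real.sqrt 3 * x / 2) :=
    Real.continuous_sinh.comp ((continuous_const.mul continuous_id).div_const 2)
  apply Continuous.mul continuous_const
  apply Continuous.sub
  · exact (continuous_const.div hc fun x => (Real.cosh_pos _).ne').pow 2
  · exact Continuous.div (((continuous_const.mul continuous_id).div_const 2).mul hs)
      (hc.pow 3) fun x => by positivity

lemma Efun_bound (x : ℝ) : ‖Efun x‖ ≤ 10 * Real.exp (-|x|) := by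
  have hs3 := sqrt3_ge
  have hs3' := sqrt3_le_two
  set u := Real.sqrt 3 * x / 2 with hu
  have hc := Real.cosh_pos u
  have hc1 := Real.one_le_cosh u
  have habsu : |u| = Real.sqrt 3 * |x| / 2 := by
    rw [hu, abs_div, abs_mul, abs_of_nonneg (Real.sqrt_nonneg 3)]
    norm_num
  have hsc : |Real.sinh u| ≤ Real.cosh u := by
    have h1 := Real.cosh_sub_sinh u
    have h2 := Real.cosh_add_sinh u
    have e1 := Real.exp_pos (-u)
    have e2 := Real.exp_pos u
    rw [abs_le]; constructor <;> linarith
  have hinv : (Real.cosh u)⁻¹ ≤ 2 * Real.exp (-|u|) := by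
    have h := exp_abs_le_two_cosh' u
    have he := Real.exp_pos |u|
    have h2 : (Real.cosh u)⁻¹ ≤ (Real.exp |u| / 2)⁻¹ := by
      apply inv_anti₀ (by positivity) (by linarith)
    calc (Real.cosh u)⁻¹ ≤ (Real.exp |u| / 2)⁻¹ := h2
      _ = 2 * Real.exp (-|u|) := by rw [Real.exp_neg]; field_simp
  -- E3 = exp(-√3 |x|)
  set E3 := Real.exp (-(Real.sqrt 3 * |x|)) with hE3
  have hA : (1 / Real.cosh u) ^ 2 ≤ 4 * E3 := by
    have h1 : (1 / Real.cosh u) ^ 2 ≤ (2 * Real.exp (-|u|)) ^ 2 := by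
      apply pow_le_pow_left₀ (by positivity) _ 2
      rwa [one_div]
    have h2 : (2:ℝ) ^ 2 * Real.exp (-|u|) ^ 2 = 4 * E3 := by
      have h3 : Real.exp (-|u|) ^ 2 = E3 := by
        rw [pow_two, ← Real.exp_add, hE3, habsu]
        ring_nf
      rw [h3]; norm_num
    rw [mul_pow] at h1
    linarith
  have hB : |Real.sqrt 3 * x / 2 * Real.sinh u / Real.cosh u ^ 3|
      ≤ Real.sqrt 3 * |x| / 2 * (4 * E3) := by
    rw [abs_div, abs_mul, abs_of_nonneg (by positivity : (0:ℝ) ≤ Real.cosh u ^ 3)]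
    have h1 : |Real.sqrt 3 * x / 2| = Real.sqrt 3 * |x| / 2 := habsu ▸ rfl
    rw [h1]
    have h2 : |Real.sinh u| / Real.cosh u ^ 3 ≤ (1 / Real.cosh u) ^ 2 := by
      rw [div_le_iff₀ (by positivity)]
      have : (1 / Real.cosh u) ^ 2 * Real.cosh u ^ 3 = Real.cosh u := by
        field_simp
      rw [this]
      exact hsc
    calc Real.sqrt 3 * |x| / 2 * |Real.sinh u| / Real.cosh u ^ 3
        = Real.sqrt 3 * |x| / 2 * (|Real.sinh u| / Real.cosh u ^ 3) := by ring
      _ ≤ Real.sqrt 3 * |x| / 2 * ((1 / Real.cosh u) ^ 2) := by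
          apply mul_le_mul_of_nonneg_left h2 (by positivity)
      _ ≤ Real.sqrt 3 * |x| / 2 * (4 * E3) := by
          apply mul_le_mul_of_nonneg_left hA (by positivity)
  -- bounds on E3 against exp(-|x|)
  have hE3e : E3 ≤ Real.exp (-|x|) := Real.exp_le_exp.mpr (by nlinarith [abs_nonneg x])
  have hxE3 : |x| * E3 ≤ 10/7 * Real.exp (-|x|) := by
    have hsplit : E3 = Real.exp (-((Real.sqrt 3 - 1) * |x|)) * Real.exp (-|x|) := by
      rw [hE3, ← Real.exp_add]; ring_nf
    have hm := mul_exp_neg_le' (show (0:ℝ) < Real.sqrt 3 - 1 by linarith) (abs_nonneg x)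
    have h17 : 1 / (Real.sqrt 3 - 1) ≤ 10/7 := by
      rw [div_le_div_iff₀ (by linarith) (by norm_num)]
      linarith
    have he := Real.exp_pos (-|x|)
    calc |x| * E3 = (|x| * Real.exp (-((Real.sqrt 3 - 1) * |x|))) * Real.exp (-|x|) := by
          rw [hsplit]; ring
      _ ≤ (1 / (Real.sqrt 3 - 1)) * Real.exp (-|x|) := by
          apply mul_le_mul_of_nonneg_right hm he.le
      _ ≤ 10/7 * Real.exp (-|x|) := by
          apply mul_le_mul_of_nonneg_right h17 he.le
  have he := Real.exp_pos (-|x|)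
  have hE3nn : (0:ℝ) ≤ E3 := (Real.exp_pos _).le
  rw [Real.norm_eq_abs, Efun, abs_mul, abs_of_nonpos (by norm_num : -(1/2:ℝ) ≤ 0)]
  have htri : |(1 / Real.cosh u) ^ 2 - Real.sqrt 3 * x / 2 * Real.sinh u / Real.cosh u ^ 3|
      ≤ (1 / Real.cosh u) ^ 2 + |Real.sqrt 3 * x / 2 * Real.sinh u / Real.cosh u ^ 3| := by
    have := abs_sub (((1:ℝ) / Real.cosh u) ^ 2) (Real.sqrt 3 * x / 2 * Real.sinh u / Real.cosh u ^ 3)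
    rwa [abs_of_nonneg (by positivity : (0:ℝ) ≤ (1 / Real.cosh u) ^ 2)] at this
  nlinarith [htri, hA, hB, hE3e, hxE3, abs_nonneg (Real.sqrt 3 * x / 2 * Real.sinh u / Real.cosh u ^ 3)]

lemma integrable_Efun : Integrable Efun := by
  have h10 : Integrable (fun x : ℝ => 10 * Real.exp (-|x|)) := integrable_exp_neg_abs'.const_mul 10
  exact h10.mono' continuous_Efun.aestronglyMeasurable (Filter.Eventually.of_forall Efun_bound)



/-- The Jordan chain at `λ = 0` has length exactly 2: there is no smooth decaying
solution `f₂` of `(−½∂ₓ + (1/6)∂ₓ³ + (3/2)∂ₓ∘S) f₂ + f₁ = 0`, where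
`S(x) = sech²(√3 x/2)` and `f₁ = −½ ∂_b φ_b|_{b=1}` with
`φ_b(x) = b sech²(√(3b) x/2)`. -/
theorem no_third_jordan_element :
    ¬ ∃ f₂ : ℝ → ℝ, ContDiff ℝ (⊤ : ℕ∞) f₂ ∧
      Integrable f₂ ∧ MemLp f₂ 2 volume ∧
      Integrable (deriv f₂) ∧ MemLp (deriv f₂) 2 volume ∧
      Integrable (deriv (deriv f₂)) ∧ MemLp (deriv (deriv f₂)) 2 volume ∧
      Tendsto f₂ atTop (nhds 0) ∧ Tendsto f₂ atBot (nhds 0) ∧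
      Tendsto (deriv f₂) atTop (nhds 0) ∧ Tendsto (deriv f₂) atBot (nhds 0) ∧
      Tendsto (deriv (deriv f₂)) atTop (nhds 0) ∧ Tendsto (deriv (deriv f₂)) atBot (nhds 0) ∧
      ∀ x : ℝ,
        -(1 / 2) * deriv f₂ x + (1 / 6) * deriv (deriv (deriv f₂)) x +
          deriv (fun y : ℝ => (3 / 2) * (1 / Real.cosh (Real.sqrt 3 * y / 2)) ^ 2 * f₂ y) x +
          (-(1 / 2) * deriv (fun b : ℝ => b * (1 / Real.cosh (Real.sqrt (3 * b) * x / 2)) ^ 2) 1)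
        = 0 := by
  rintro ⟨f₂, hsm, -, -, -, -, -, -, ht0, hb0, -, -, ht2, hb2, heq⟩
  have hsm' : ContDiff ℝ ((⊤ : ℕ∞) : WithTop ℕ∞) f₂ := hsm.of_le (by simp)
  have hd0 : Differentiable ℝ f₂ := (contDiff_infty_iff_deriv.mp hsm').1
  have hsm1 : ContDiff ℝ ((⊤ : ℕ∞) : WithTop ℕ∞) (deriv f₂) := (contDiff_infty_iff_deriv.mp hsm').2
  have hsm2 : ContDiff ℝ ((⊤ : ℕ∞) : WithTop ℕ∞) (deriv (deriv f₂)) := (contDiff_infty_iff_deriv.mp hsm1).2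
  have hd2 : Differentiable ℝ (deriv (deriv f₂)) := (contDiff_infty_iff_deriv.mp hsm2).1
  have hcosh : Differentiable ℝ (fun y : ℝ => Real.cosh (Real.sqrt 3 * y / 2)) :=
    Real.differentiable_cosh.comp ((differentiable_id.const_mul (Real.sqrt 3)).div_const 2)
  have hS : Differentiable ℝ
      (fun y : ℝ => (3 / 2) * (1 / Real.cosh (Real.sqrt 3 * y / 2)) ^ 2 * f₂ y) := by
    apply Differentiable.mul _ hd0
    apply Differentiable.const_mul
    apply Differentiable.pow
    exact Differentiable.div (differentiable_const 1) hcosh fun y => (Real.cosh_pos _).ne'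
  set G : ℝ → ℝ := fun x => 1 / 2 * f₂ x - 1 / 6 * deriv (deriv f₂) x
      - (3 / 2) * (1 / Real.cosh (Real.sqrt 3 * x / 2)) ^ 2 * f₂ x with hGdef
  have hG : ∀ x, HasDerivAt G (Efun x) x := by
    intro x
    have h1 := (hd0 x).hasDerivAt.const_mul (1 / 2 : ℝ)
    have h2 := (hd2 x).hasDerivAt.const_mul (1 / 6 : ℝ)
    have h3 := (hS x).hasDerivAt
    have h4 := (h1.sub h2).sub h3
    refine h4.congr_deriv (Eq.symm ?_)
    have he := heq x
    rw [(hasDerivAt_b x).deriv] at he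
    simp only [Efun]
    linarith
  have hP : ∀ x : ℝ, ‖(3 / 2) * (1 / Real.cosh (Real.sqrt 3 * x / 2)) ^ 2 * f₂ x‖
      ≤ 3 / 2 * ‖f₂ x‖ := by
    intro x
    have hc1 := Real.one_le_cosh (Real.sqrt 3 * x / 2)
    have hc := Real.cosh_pos (Real.sqrt 3 * x / 2)
    rw [norm_mul, norm_mul]
    have hb : ‖(1 / Real.cosh (Real.sqrt 3 * x / 2)) ^ 2‖ ≤ 1 := by
      rw [norm_pow, Real.norm_eq_abs, abs_of_nonneg (by positivity)]
      have h5 : 1 / Real.cosh (Real.sqrt 3 * x / 2) ≤ 1 := by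
        rw [div_le_one hc]; exact hc1
      nlinarith [le_of_lt (one_div_pos.mpr hc)]
    have h32 : ‖(3 / 2 : ℝ)‖ = 3 / 2 := by rw [Real.norm_eq_abs]; norm_num
    rw [h32]
    have := norm_nonneg (f₂ x)
    nlinarith [norm_nonneg ((1 / Real.cosh (Real.sqrt 3 * x / 2)) ^ 2)]
  have hPtop : Tendsto
      (fun x : ℝ => (3 / 2) * (1 / Real.cosh (Real.sqrt 3 * x / 2)) ^ 2 * f₂ x) atTop (nhds 0) := by
    apply squeeze_zero_norm hP
    have := ht0.norm
    rw [norm_zero] at this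
    simpa using this.const_mul (3 / 2 : ℝ)
  have hPbot : Tendsto
      (fun x : ℝ => (3 / 2) * (1 / Real.cosh (Real.sqrt 3 * x / 2)) ^ 2 * f₂ x) atBot (nhds 0) := by
    apply squeeze_zero_norm hP
    have := hb0.norm
    rw [norm_zero] at this
    simpa using this.const_mul (3 / 2 : ℝ)
  have hGtop : Tendsto G atTop (nhds 0) := by
    have h := ((ht0.const_mul (1 / 2 : ℝ)).sub (ht2.const_mul (1 / 6 : ℝ))).sub hPtop
    rw [show (1 / 2 : ℝ) * 0 - 1 / 6 * 0 - 0 = 0 by ring] at h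
    exact h.congr fun x => rfl
  have hGbot : Tendsto G atBot (nhds 0) := by
    have h := ((hb0.const_mul (1 / 2 : ℝ)).sub (hb2.const_mul (1 / 6 : ℝ))).sub hPbot
    rw [show (1 / 2 : ℝ) * 0 - 1 / 6 * 0 - 0 = 0 by ring] at h
    exact h.congr fun x => rfl
  have hzero : ∫ x, Efun x = 0 - 0 :=
    integral_of_hasDerivAt_of_tendsto hG integrable_Efun hGbot hGtop
  have hval : ∫ x, Efun x = -(1 / (2 * Real.sqrt 3)) - 1 / (2 * Real.sqrt 3) :=
    integral_of_hasDerivAt_of_tendsto hasDerivAt_Hfun integrable_Efun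
      tendsto_Hfun_atBot tendsto_Hfun_atTop
  have hpos : (0 : ℝ) < 1 / (2 * Real.sqrt 3) := by positivity
  rw [hzero] at hval
  linarith
end
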